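/- arXiv:math/0702039 — 5 statements merged into one kernel-verified Lean document; each statement's English description precedes it below -/
import Mathlib

section
/- Let G be a bipartite graph with maximum degree Δ on parts of size n, and suppose every matching of size k ≤ n−1 can be extended to a matching of size k+1 via at least (n−k)/2 distinct alternating paths of length at most ℓ (counted by starting vertex). Then M(k)/M(k+1) ≤ 2 n Δ^ℓ / (n−k), where M(j) denotes the number of matchings of size j in G. -/
open Finset
open scoped Classical

/-- `M` is a matching: no two distinct edges share a left or a right endpoint. -/
def IsMatching {n : ℕ} (M : Finset (Fin n × Fin n)) : Prop :=
  ∀ e ∈ M, ∀ f ∈ M, e ≠ f → e.1 ≠ f.1 ∧ e.2 ≠ f.2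

/-- Neighbors (in `V₂`) of a set `A ⊆ V₁` in the bipartite graph with edge set `E`. -/
def leftN {n : ℕ} (E : Finset (Fin n × Fin n)) (A : Finset (Fin n)) : Finset (Fin n) :=
  (E.filter (fun e => e.1 ∈ A)).image Prod.snd

/-- Neighbors (in `V₁`) of a set `B ⊆ V₂`. -/
def rightN {n : ℕ} (E : Finset (Fin n × Fin n)) (B : Finset (Fin n)) : Finset (Fin n) :=
  (E.filter (fun e => e.2 ∈ B)).image Prod.fst

/-- `E` is an `α`-expander: every set on either side of size at most `n/2`
has at least `(1+α)` times as many neighbors. -/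
def IsExpander {n : ℕ} (E : Finset (Fin n × Fin n)) (α : ℝ) : Prop :=
  (∀ A : Finset (Fin n), (A.card : ℝ) ≤ n / 2 → (1 + α) * A.card ≤ ((leftN E A).card : ℝ)) ∧
  (∀ B : Finset (Fin n), (B.card : ℝ) ≤ n / 2 → (1 + α) * B.card ≤ ((rightN E B).card : ℝ))

/-- An alternating walk `v₁ v₂ … v₂ᵣ` with respect to the matching `M`:
`a l = v₂ₗ₊₁` (left vertices), `b l = v₂ₗ₊₂` (right vertices), for `0 ≤ l < r`.
It starts at an unmatched left vertex `a 0`, the edges `(a l, b l)` (the odd-position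
edges `(v₂ₗ₋₁, v₂ₗ)`) are non-matching edges of the graph, and the edges
`(a (l+1), b l)` (the even-position edges `(v₂ₗ, v₂ₗ₊₁)`) belong to `M`. -/
def IsAltWalk {n : ℕ} (E M : Finset (Fin n × Fin n)) (r : ℕ) (a b : ℕ → Fin n) : Prop :=
  0 < r ∧
  (∀ i < r, ∀ j < r, i ≠ j → a i ≠ a j) ∧
  (∀ i < r, ∀ j < r, i ≠ j → b i ≠ b j) ∧
  (∀ l < r, (a l, b l) ∈ E ∧ (a l, b l) ∉ M) ∧
  (∀ l, l + 1 < r → (a (l + 1), b l) ∈ M) ∧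
  (∀ e ∈ M, e.1 ≠ a 0)

/-- An alternating path with respect to `M`: an alternating walk that moreover ends at an
unmatched right vertex `b (r-1) = v₂ᵣ`.  Its length (number of positions) is `2r`. -/
def IsAltPath {n : ℕ} (E M : Finset (Fin n × Fin n)) (r : ℕ) (a b : ℕ → Fin n) : Prop :=
  IsAltWalk E M r a b ∧ (∀ e ∈ M, e.2 ≠ b (r - 1))

/-- `M(k)`: the number of matchings of size `k` in the graph with edge set `E`. -/
noncomputable def numMatchings {n : ℕ} (E : Finset (Fin n × Fin n)) (k : ℕ) : ℕ :=
  (E.powerset.filter (fun M => IsMatching M ∧ M.card = k)).card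

/-- The maximum degree of the graph is at most `Δ`. -/
def maxDegLe {n : ℕ} (E : Finset (Fin n × Fin n)) (Δ : ℕ) : Prop :=
  (∀ v : Fin n, (E.filter (fun e => e.1 = v)).card ≤ Δ) ∧
  (∀ v : Fin n, (E.filter (fun e => e.2 = v)).card ≤ Δ)

/-- The monomer–dimer partition function `Z(λ,G) = ∑_{1 ≤ k ≤ n} λ^k M(k)`. -/
noncomputable def partitionZ (n : ℕ) (E : Finset (Fin n × Fin n)) (lam : ℝ) : ℝ :=
  ∑ k ∈ Finset.Icc 1 n, lam ^ k * (numMatchings E k : ℝ)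

/-- `Perm(S,T)`: the number of perfect matchings of the subgraph induced by `S ∪ T`,
i.e. matchings contained in `E` whose left endpoints are exactly `S` and right
endpoints exactly `T`. -/
noncomputable def permBtw {n : ℕ} (E : Finset (Fin n × Fin n)) (S T : Finset (Fin n)) : ℕ :=
  (E.powerset.filter
    (fun M => IsMatching M ∧ M.image Prod.fst = S ∧ M.image Prod.snd = T)).card

/-- `L_r`: the set of right vertices reachable from `L` via alternating walks of length
at most `2r`. -/
noncomputable def altReach {n : ℕ} (E M : Finset (Fin n × Fin n)) (L : Finset (Fin n))
    (r : ℕ) : Finset (Fin n) :=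
  Finset.univ.filter (fun j => ∃ s, 1 ≤ s ∧ s ≤ r ∧ ∃ a b : ℕ → Fin n,
    IsAltWalk E M s a b ∧ a 0 ∈ L ∧ b (s - 1) = j)


namespace RatioBoundAux

variable {n : ℕ}

def pathE (a b : ℕ → Fin n) (r : ℕ) : Finset (Fin n × Fin n) :=
  (Finset.range r).image (fun l => (a l, b l))

def matchE (a b : ℕ → Fin n) (r : ℕ) : Finset (Fin n × Fin n) :=
  (Finset.range (r - 1)).image (fun l => (a (l + 1), b l))

def augment (M : Finset (Fin n × Fin n)) (a b : ℕ → Fin n) (r : ℕ) :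
    Finset (Fin n × Fin n) := (M \ matchE a b r) ∪ pathE a b r

lemma mem_pathE {a b : ℕ → Fin n} {r : ℕ} {e : Fin n × Fin n} :
    e ∈ pathE a b r ↔ ∃ l, l < r ∧ (a l, b l) = e := by
  simp [pathE, Finset.mem_image, Finset.mem_range]

lemma mem_matchE {a b : ℕ → Fin n} {r : ℕ} {e : Fin n × Fin n} :
    e ∈ matchE a b r ↔ ∃ l, l < r - 1 ∧ (a (l + 1), b l) = e := by
  simp [matchE, Finset.mem_image, Finset.mem_range]

lemma matchE_subset_M {E M : Finset (Fin n × Fin n)} {r : ℕ} {a b : ℕ → Fin n}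
    (hw : IsAltWalk E M r a b) : matchE a b r ⊆ M := by
  intro e he
  obtain ⟨l, hl, rfl⟩ := mem_matchE.1 he
  exact hw.2.2.2.2.1 l (by omega)

lemma card_pathE {E M : Finset (Fin n × Fin n)} {r : ℕ} {a b : ℕ → Fin n}
    (hw : IsAltWalk E M r a b) : (pathE a b r).card = r := by
  rw [pathE, Finset.card_image_of_injOn, Finset.card_range]
  intro i hi j hj hij
  simp only [Finset.mem_coe, Finset.mem_range] at hi hj
  by_contra hne
  exact hw.2.1 i hi j hj hne (congrArg Prod.fst hij)

lemma card_matchE {E M : Finset (Fin n × Fin n)} {r : ℕ} {a b : ℕ → Fin n}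
    (hw : IsAltWalk E M r a b) : (matchE a b r).card = r - 1 := by
  rw [matchE, Finset.card_image_of_injOn, Finset.card_range]
  intro i hi j hj hij
  simp only [Finset.mem_coe, Finset.mem_range] at hi hj
  by_contra hne
  exact hw.2.2.1 i (by omega) j (by omega) hne (congrArg Prod.snd hij)

lemma pathE_disj {E M : Finset (Fin n × Fin n)} {r : ℕ} {a b : ℕ → Fin n}
    (hw : IsAltWalk E M r a b) : ∀ e ∈ pathE a b r, e ∉ M := by
  intro e he
  obtain ⟨l, hl, rfl⟩ := mem_pathE.1 he
  exact (hw.2.2.2.1 l hl).2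

lemma pathE_subset_E {E M : Finset (Fin n × Fin n)} {r : ℕ} {a b : ℕ → Fin n}
    (hw : IsAltWalk E M r a b) : pathE a b r ⊆ E := by
  intro e he
  obtain ⟨l, hl, rfl⟩ := mem_pathE.1 he
  exact (hw.2.2.2.1 l hl).1

lemma augment_subset {E M : Finset (Fin n × Fin n)} {r : ℕ} {a b : ℕ → Fin n}
    (hME : M ⊆ E) (hw : IsAltWalk E M r a b) : augment M a b r ⊆ E :=
  Finset.union_subset (Finset.Subset.trans (Finset.sdiff_subset) hME) (pathE_subset_E hw)

lemma card_augment {E M : Finset (Fin n × Fin n)} {r : ℕ} {a b : ℕ → Fin n}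
    (hw : IsAltWalk E M r a b) : (augment M a b r).card = M.card + 1 := by
  have h1 := matchE_subset_M hw
  have h2 : Disjoint (M \ matchE a b r) (pathE a b r) := by
    rw [Finset.disjoint_left]
    intro e hes het
    exact pathE_disj hw e het (Finset.mem_sdiff.1 hes).1
  rw [augment, Finset.card_union_of_disjoint h2, Finset.card_sdiff_of_subset h1, card_matchE hw,
    card_pathE hw]
  have h3 : r - 1 ≤ M.card := (card_matchE hw) ▸ Finset.card_le_card h1
  have hr := hw.1
  omega

lemma cross {E M : Finset (Fin n × Fin n)} {r : ℕ} {a b : ℕ → Fin n}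
    (hm : IsMatching M) (hp : IsAltPath E M r a b) :
    ∀ l, l < r → ∀ f ∈ M \ matchE a b r, a l ≠ f.1 ∧ b l ≠ f.2 := by
  obtain ⟨⟨hr, ha, hb, hEl, hMl, h0⟩, hend⟩ := hp
  intro l hl f hf
  rw [Finset.mem_sdiff] at hf
  obtain ⟨hfM, hfme⟩ := hf
  constructor
  · intro hal
    rcases Nat.eq_zero_or_pos l with rfl | hlpos
    · exact h0 f hfM hal.symm
    · obtain ⟨m, rfl⟩ : ∃ m, l = m + 1 := ⟨l - 1, by omega⟩
      have hg : (a (m + 1), b m) ∈ M := hMl m hl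
      have hfg : f = (a (m + 1), b m) := by
        by_contra hne
        exact (hm f hfM _ hg hne).1 hal.symm
      exact hfme (mem_matchE.2 ⟨m, by omega, hfg.symm⟩)
  · intro hbl
    rcases eq_or_lt_of_le (show l ≤ r - 1 by omega) with heq | hlt
    · exact hend f hfM (by rw [← heq]; exact hbl.symm)
    · have hg : (a (l + 1), b l) ∈ M := hMl l (by omega)
      have hfg : f = (a (l + 1), b l) := by
        by_contra hne
        exact (hm f hfM _ hg hne).2 hbl.symm
      exact hfme (mem_matchE.2 ⟨l, by omega, hfg.symm⟩)

lemma isMatching_augment {E M : Finset (Fin n × Fin n)} {r : ℕ} {a b : ℕ → Fin n}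
    (hm : IsMatching M) (hp : IsAltPath E M r a b) :
    IsMatching (augment M a b r) := by
  intro e he f hf hef
  rw [augment, Finset.mem_union] at he hf
  rcases he with he | he <;> rcases hf with hf | hf
  · exact hm e (Finset.mem_sdiff.1 he).1 f (Finset.mem_sdiff.1 hf).1 hef
  · obtain ⟨l, hl, rfl⟩ := mem_pathE.1 hf
    have h := cross hm hp l hl e he
    exact ⟨fun hc => h.1 hc.symm, fun hc => h.2 hc.symm⟩
  · obtain ⟨l, hl, rfl⟩ := mem_pathE.1 he
    exact cross hm hp l hl f hf
  · obtain ⟨i, hi, rfl⟩ := mem_pathE.1 he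
    obtain ⟨j, hj, rfl⟩ := mem_pathE.1 hf
    have hij : i ≠ j := fun h => hef (by rw [h])
    exact ⟨hp.1.2.1 i hi j hj hij, hp.1.2.2.1 i hi j hj hij⟩

lemma recover {E M : Finset (Fin n × Fin n)} {r : ℕ} {a b : ℕ → Fin n}
    (hw : IsAltWalk E M r a b) :
    (augment M a b r \ pathE a b r) ∪ matchE a b r = M := by
  ext e
  simp only [Finset.mem_union, Finset.mem_sdiff, augment]
  constructor
  · rintro (⟨⟨heM, _⟩ | hpe, hnp⟩ | hme)
    · exact heM
    · exact absurd hpe hnp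
    · exact matchE_subset_M hw hme
  · intro heM
    by_cases h : e ∈ matchE a b r
    · exact Or.inr h
    · exact Or.inl ⟨Or.inl ⟨heM, h⟩, fun hp => pathE_disj hw e hp heM⟩

lemma matching_fst {M' : Finset (Fin n × Fin n)} (h : IsMatching M') {x y1 y2 : Fin n}
    (h1 : (x, y1) ∈ M') (h2 : (x, y2) ∈ M') : y1 = y2 := by
  by_contra hne
  have hne' : ((x, y1) : Fin n × Fin n) ≠ (x, y2) := by simp [Prod.ext_iff, hne]
  exact (h _ h1 _ h2 hne').1 rfl

lemma path_det {M' : Finset (Fin n × Fin n)} (hM' : IsMatching M') {r : ℕ}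
    {a1 b1 a2 b2 : ℕ → Fin n}
    (hP1 : pathE a1 b1 r ⊆ M') (hP2 : pathE a2 b2 r ⊆ M')
    (h0 : a1 0 = a2 0)
    (hstep : ∀ l, l + 1 < r → b1 l = b2 l → a1 (l + 1) = a2 (l + 1)) :
    ∀ l, l < r → a1 l = a2 l ∧ b1 l = b2 l := by
  intro l
  induction l with
  | zero =>
    intro hl
    refine ⟨h0, ?_⟩
    have h1 : (a1 0, b1 0) ∈ M' := hP1 (mem_pathE.2 ⟨0, hl, rfl⟩)
    have h2 : (a2 0, b2 0) ∈ M' := hP2 (mem_pathE.2 ⟨0, hl, rfl⟩)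
    rw [h0] at h1
    exact matching_fst hM' h1 h2
  | succ m ih =>
    intro hl
    obtain ⟨ham, hbm⟩ := ih (by omega)
    have ha : a1 (m + 1) = a2 (m + 1) := hstep m hl hbm
    refine ⟨ha, ?_⟩
    have h1 : (a1 (m + 1), b1 (m + 1)) ∈ M' := hP1 (mem_pathE.2 ⟨m + 1, hl, rfl⟩)
    have h2 : (a2 (m + 1), b2 (m + 1)) ∈ M' := hP2 (mem_pathE.2 ⟨m + 1, hl, rfl⟩)
    rw [ha] at h1
    exact matching_fst hM' h1 h2

lemma pathE_congr {a1 b1 a2 b2 : ℕ → Fin n} {r : ℕ}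
    (h : ∀ l, l < r → a1 l = a2 l ∧ b1 l = b2 l) : pathE a1 b1 r = pathE a2 b2 r := by
  unfold pathE
  apply Finset.image_congr
  intro l hl
  simp only [Finset.mem_coe, Finset.mem_range] at hl
  show (a1 l, b1 l) = (a2 l, b2 l)
  rw [(h l hl).1, (h l hl).2]

lemma matchE_congr {a1 b1 a2 b2 : ℕ → Fin n} {r : ℕ}
    (h : ∀ l, l < r → a1 l = a2 l ∧ b1 l = b2 l) : matchE a1 b1 r = matchE a2 b2 r := by
  unfold matchE
  apply Finset.image_congr
  intro l hl
  simp only [Finset.mem_coe, Finset.mem_range] at hl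
  show (a1 (l + 1), b1 l) = (a2 (l + 1), b2 l)
  rw [(h (l + 1) (by omega)).1, (h l (by omega)).2]

lemma walk_r_one {E M : Finset (Fin n × Fin n)} {Δ r : ℕ} {a b : ℕ → Fin n}
    (hΔ : maxDegLe E Δ) (hΔ1 : Δ ≤ 1) (hME : M ⊆ E) (hw : IsAltWalk E M r a b) :
    r = 1 := by
  obtain ⟨hr, ha, hb, hEl, hMl, h0⟩ := hw
  by_contra hne
  have h2 : 2 ≤ r := by omega
  have he : ((a 0, b 0) : Fin n × Fin n) ∈ E.filter (fun e => e.2 = b 0) :=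
    Finset.mem_filter.2 ⟨(hEl 0 (by omega)).1, rfl⟩
  have hf : ((a 1, b 0) : Fin n × Fin n) ∈ E.filter (fun e => e.2 = b 0) :=
    Finset.mem_filter.2 ⟨hME (hMl 0 (by omega)), rfl⟩
  have hne2 : ((a 0, b 0) : Fin n × Fin n) ≠ (a 1, b 0) := by
    have h01 := ha 0 (by omega) 1 (by omega) (by omega)
    simp [Prod.ext_iff, h01]
  have hlt : 1 < (E.filter (fun e => e.2 = b 0)).card :=
    Finset.one_lt_card.2 ⟨_, he, _, hf, hne2⟩
  have := hΔ.2 (b 0)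
  omega

lemma code_inj_step {Δ : ℕ} {s1 s2 : Finset (Fin n × Fin n)} (hs : s1 = s2)
    (h1c : s1.card ≤ Δ) (h2c : s2.card ≤ Δ) {e1 e2 : Fin n × Fin n}
    (h1 : e1 ∈ s1) (h2 : e2 ∈ s2)
    (h : Fin.castLE h1c (s1.equivFin ⟨e1, h1⟩) = Fin.castLE h2c (s2.equivFin ⟨e2, h2⟩)) :
    e1 = e2 := by
  subst hs
  have heq : s1.equivFin ⟨e1, h1⟩ = s1.equivFin ⟨e2, h2⟩ := by
    apply Fin.ext
    simpa using congrArg Fin.val h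
  have := s1.equivFin.injective heq
  exact Subtype.ext_iff.1 this

end RatioBoundAux

/-- Double-counting bound: if every `k`-matching has at least `(n-k)/2` starting vertices of
augmenting alternating paths of length at most `ℓ`, then `M(k)/M(k+1) ≤ 2 n Δ^ℓ/(n-k)`. -/
theorem ratio_bound_from_paths (n k ℓ Δ : ℕ) (E : Finset (Fin n × Fin n))
    (hΔ : maxDegLe E Δ) (hk : k < n)
    (hyp : ∀ M : Finset (Fin n × Fin n), M ⊆ E → IsMatching M → M.card = k →
      ∃ S : Finset (Fin n), ((n : ℝ) - k) / 2 ≤ S.card ∧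
        (∀ v ∈ S, ∀ e ∈ M, e.1 ≠ v) ∧
        (∀ v ∈ S, ∃ (r : ℕ) (a b : ℕ → Fin n), IsAltPath E M r a b ∧ a 0 = v ∧ 2 * r ≤ ℓ)) :
    (numMatchings E k : ℝ) ≤
      2 * n * (Δ : ℝ) ^ ℓ / ((n : ℝ) - k) * (numMatchings E (k + 1) : ℝ) := by
  classical
  open RatioBoundAux in
  have hn : 0 < n := Nat.lt_of_le_of_lt (Nat.zero_le k) hk
  haveI : Nonempty (Fin n) := ⟨⟨0, hn⟩⟩
  set 𝓚 : Finset (Finset (Fin n × Fin n)) :=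
    E.powerset.filter (fun M => IsMatching M ∧ M.card = k) with h𝓚def
  set 𝓚' : Finset (Finset (Fin n × Fin n)) :=
    E.powerset.filter (fun M => IsMatching M ∧ M.card = k + 1) with h𝓚'def
  have hex : ∀ M ∈ 𝓚, ∃ S : Finset (Fin n), (((n : ℝ) - k) / 2 ≤ S.card) ∧
      (∀ v ∈ S, ∃ r a b, IsAltPath E M r a b ∧ a 0 = v ∧ 2 * r ≤ ℓ) := by
    intro M hM
    rw [h𝓚def, Finset.mem_filter, Finset.mem_powerset] at hM
    obtain ⟨S, h1, _, h3⟩ := hyp M hM.1 hM.2.1 hM.2.2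
    exact ⟨S, h1, h3⟩
  choose! S hS1 hS2 using hex
  set T := 𝓚.sigma (fun M => S M) with hTdef
  have hex2 : ∀ x : (Σ _ : Finset (Fin n × Fin n), Fin n), x ∈ T →
      ∃ p : ℕ × (ℕ → Fin n) × (ℕ → Fin n),
        IsAltPath E x.1 p.1 p.2.1 p.2.2 ∧ p.2.1 0 = x.2 ∧ 2 * p.1 ≤ ℓ := by
    intro x hx
    rw [hTdef, Finset.mem_sigma] at hx
    obtain ⟨r, a, b, h⟩ := hS2 x.1 hx.1 x.2 hx.2
    exact ⟨(r, a, b), h⟩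
  choose! P hP1 hP2 hP3 using hex2
  have hmemT : ∀ x ∈ T, x.1 ⊆ E ∧ IsMatching x.1 ∧ x.1.card = k := by
    intro x hx
    rw [hTdef, Finset.mem_sigma] at hx
    have := hx.1
    rw [h𝓚def, Finset.mem_filter, Finset.mem_powerset] at this
    exact ⟨this.1, this.2.1, this.2.2⟩
  have hcount : T.card ≤ 𝓚'.card * (n * Δ ^ ℓ) := by
    rcases Nat.eq_zero_or_pos Δ with rfl | hΔpos
    · have hTe : T = ∅ := by
        rw [Finset.eq_empty_iff_forall_notMem]
        intro x hx
        have hp := hP1 x hx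
        have h00 : (((P x).2.1 0, (P x).2.2 0) : Fin n × Fin n) ∈ E :=
          (hp.1.2.2.2.1 0 hp.1.1).1
        have hmem : (((P x).2.1 0, (P x).2.2 0) : Fin n × Fin n) ∈
            E.filter (fun e => e.1 = (P x).2.1 0) := Finset.mem_filter.2 ⟨h00, rfl⟩
        have hcard := Finset.card_pos.2 ⟨_, hmem⟩
        have := hΔ.1 ((P x).2.1 0)
        omega
      simp [hTe]
    · set code : (Σ _ : Finset (Fin n × Fin n), Fin n) → (Fin ℓ → Fin Δ) := fun x i =>
        if i.1 = ℓ - (P x).1 then ⟨min 1 (Δ - 1), by omega⟩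
        else if h : i.1 + 1 < (P x).1 ∧
            (((P x).2.1 (i.1 + 1), (P x).2.2 i.1) : Fin n × Fin n) ∈
              E.filter (fun e => e.2 = (P x).2.2 i.1) then
          Fin.castLE (hΔ.2 ((P x).2.2 i.1))
            ((E.filter (fun e => e.2 = (P x).2.2 i.1)).equivFin ⟨_, h.2⟩)
        else ⟨0, hΔpos⟩
        with hcodedef
      have hle : T.card ≤ (𝓚' ×ˢ (Finset.univ : Finset (Fin n × (Fin ℓ → Fin Δ)))).card := by
        apply Finset.card_le_card_of_injOn
          (fun x => (augment x.1 (P x).2.1 (P x).2.2 (P x).1, (x.2, code x)))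
        · intro x hx
          rw [Finset.mem_coe, Finset.mem_product]
          refine ⟨?_, Finset.mem_univ _⟩
          obtain ⟨hsub, hmx, hcx⟩ := hmemT x hx
          have hp := hP1 x hx
          rw [h𝓚'def, Finset.mem_filter, Finset.mem_powerset]
          exact ⟨augment_subset hsub hp.1, isMatching_augment hmx hp,
            by rw [card_augment hp.1, hcx]⟩
        · intro x1 hx1 x2 hx2 hfeq
          simp only [Finset.mem_coe] at hx1 hx2
          obtain ⟨hsub1, hm1, hc1⟩ := hmemT x1 hx1
          obtain ⟨hsub2, hm2, hc2⟩ := hmemT x2 hx2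
          have hpth1 := hP1 x1 hx1
          have hpth2 := hP1 x2 hx2
          have ha01 := hP2 x1 hx1
          have ha02 := hP2 x2 hx2
          have hl1 := hP3 x1 hx1
          have hl2 := hP3 x2 hx2
          simp only [Prod.mk.injEq] at hfeq
          obtain ⟨hM'eq, hveq, hcodeeq⟩ := hfeq
          simp only [hcodedef] at hcodeeq
          set r1 := (P x1).1 with hr1d
          set a1 := (P x1).2.1 with ha1d
          set b1 := (P x1).2.2 with hb1d
          set r2 := (P x2).1 with hr2d
          set a2 := (P x2).2.1 with ha2d
          set b2 := (P x2).2.2 with hb2d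
          have hr1 : 0 < r1 := hpth1.1.1
          have hr2 : 0 < r2 := hpth2.1.1
          have hre : r1 = r2 := by
            rcases le_or_gt Δ 1 with hD | hD
            · rw [walk_r_one hΔ hD hsub1 hpth1.1, walk_r_one hΔ hD hsub2 hpth2.1]
            · by_contra hrne
              have hi : ℓ - r1 < ℓ := by omega
              have hv := congrFun hcodeeq ⟨ℓ - r1, hi⟩
              rw [if_pos rfl] at hv
              rw [if_neg (show ¬((⟨ℓ - r1, hi⟩ : Fin ℓ).1 = ℓ - r2) by
                simp only []; omega)] at hv
              rw [dif_neg (by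
                rintro ⟨hcc, -⟩
                simp only [] at hcc
                omega)] at hv
              have hvv := congrArg Fin.val hv
              simp only [] at hvv
              omega
          rw [← hre] at hpth2 hl2 hcodeeq hM'eq
          have ha0eq : a1 0 = a2 0 := by rw [ha01, ha02, hveq]
          have hpsub1 : pathE a1 b1 r1 ⊆ augment x1.1 a1 b1 r1 :=
            Finset.subset_union_right
          have hpsub2 : pathE a2 b2 r1 ⊆ augment x1.1 a1 b1 r1 := by
            rw [hM'eq]
            exact Finset.subset_union_right
          have hstep : ∀ l, l + 1 < r1 → b1 l = b2 l → a1 (l + 1) = a2 (l + 1) := by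
            intro l hlr hbeq
            have hil : l < ℓ := by omega
            have hv := congrFun hcodeeq ⟨l, hil⟩
            have hmem1 : ((a1 (l + 1), b1 l) : Fin n × Fin n) ∈
                E.filter (fun e => e.2 = b1 l) :=
              Finset.mem_filter.2 ⟨hsub1 (hpth1.1.2.2.2.2.1 l hlr), rfl⟩
            have hmem2 : ((a2 (l + 1), b2 l) : Fin n × Fin n) ∈
                E.filter (fun e => e.2 = b2 l) :=
              Finset.mem_filter.2 ⟨hsub2 (hpth2.1.2.2.2.2.1 l hlr), rfl⟩
            rw [if_neg (show ¬((⟨l, hil⟩ : Fin ℓ).1 = ℓ - r1) by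
                simp only []; omega)] at hv
            rw [if_neg (show ¬((⟨l, hil⟩ : Fin ℓ).1 = ℓ - r1) by
                simp only []; omega)] at hv
            rw [dif_pos (show (⟨l, hil⟩ : Fin ℓ).1 + 1 < r1 ∧ _ from ⟨hlr, hmem1⟩)] at hv
            rw [dif_pos (show (⟨l, hil⟩ : Fin ℓ).1 + 1 < r1 ∧ _ from ⟨hlr, hmem2⟩)] at hv
            have hseq : E.filter (fun e => e.2 = b1 l) = E.filter (fun e => e.2 = b2 l) := by
              rw [hbeq]
            have hee := code_inj_step hseq (hΔ.2 (b1 l)) (hΔ.2 (b2 l)) hmem1 hmem2 hv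
            exact congrArg Prod.fst hee
          have hM'm : IsMatching (augment x1.1 a1 b1 r1) := isMatching_augment hm1 hpth1
          have hdet := path_det hM'm hpsub1 hpsub2 ha0eq hstep
          have hpE : pathE a1 b1 r1 = pathE a2 b2 r1 := pathE_congr hdet
          have hmE : matchE a1 b1 r1 = matchE a2 b2 r1 := matchE_congr hdet
          have hx1e : x1.1 = x2.1 := by
            have e1 := recover hpth1.1
            have e2 := recover hpth2.1
            rw [← e1, ← e2, ← hM'eq, hpE, hmE]
          exact Sigma.ext hx1e (heq_of_eq hveq)
      calc T.card ≤ (𝓚' ×ˢ (Finset.univ : Finset (Fin n × (Fin ℓ → Fin Δ)))).card := hle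
        _ = 𝓚'.card * (n * Δ ^ ℓ) := by
          rw [Finset.card_product, Finset.card_univ]
          simp [Fintype.card_fun]
  have hsum : ((n : ℝ) - k) / 2 * 𝓚.card ≤ (T.card : ℝ) := by
    rw [hTdef, Finset.card_sigma]
    push_cast
    calc ((n : ℝ) - k) / 2 * 𝓚.card = 𝓚.card • (((n : ℝ) - k) / 2) := by
          rw [nsmul_eq_mul]; ring
      _ ≤ ∑ M ∈ 𝓚, ((S M).card : ℝ) :=
          Finset.card_nsmul_le_sum 𝓚 _ _ (fun M hM => hS1 M hM)
  have hnk : (0 : ℝ) < (n : ℝ) - (k : ℝ) := by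
    have : (k : ℝ) < n := by exact_mod_cast hk
    linarith
  have hc : (T.card : ℝ) ≤ (𝓚'.card : ℝ) * ((n : ℝ) * (Δ : ℝ) ^ ℓ) := by
    exact_mod_cast hcount
  have hKk : numMatchings E k = 𝓚.card := rfl
  have hKk' : numMatchings E (k + 1) = 𝓚'.card := rfl
  rw [hKk, hKk', div_mul_eq_mul_div, le_div_iff₀ hnk]
  nlinarith [hsum, hc]
end

section
/- Let G be a bipartite α-expander with maximum degree Δ on parts of size n with M(n) ≥ 1. Then for every k ≤ n−1, M(k)/M(n) ≤ (2en/(n−k))^{C (n−k) log Δ / log(1+α)} for some universal constant C. -/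
open Finset
open scoped Classical

namespace RPM

open Finset

variable {n : ℕ}

lemma matching_eq_of_fst {M : Finset (Fin n × Fin n)} (hM : IsMatching M)
    {e f : Fin n × Fin n} (he : e ∈ M) (hf : f ∈ M) (h : e.1 = f.1) : e = f := by
  by_contra h'; exact (hM e he f hf h').1 h

lemma matching_eq_of_snd {M : Finset (Fin n × Fin n)} (hM : IsMatching M)
    {e f : Fin n × Fin n} (he : e ∈ M) (hf : f ∈ M) (h : e.2 = f.2) : e = f := by
  by_contra h'; exact (hM e he f hf h').2 h

/-- Left vertices unmatched by `M`. -/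
def unL (M : Finset (Fin n × Fin n)) : Finset (Fin n) :=
  Finset.univ.filter (fun v => ∀ e ∈ M, e.1 ≠ v)

/-- Right vertices unmatched by `M`. -/
def unR (M : Finset (Fin n × Fin n)) : Finset (Fin n) :=
  Finset.univ.filter (fun v => ∀ e ∈ M, e.2 ≠ v)

lemma unL_card {M : Finset (Fin n × Fin n)} (hM : IsMatching M) :
    (unL M).card = n - M.card := by
  have h1 : unL M = Finset.univ \ M.image Prod.fst := by
    ext v
    simp only [unL, mem_filter, mem_univ, true_and, mem_sdiff, mem_image]
    aesop
  have h2 : (M.image Prod.fst).card = M.card :=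
    Finset.card_image_of_injOn (fun e he f hf h => matching_eq_of_fst hM he hf h)
  rw [h1, Finset.card_sdiff_of_subset (Finset.subset_univ _), Finset.card_univ, h2, Fintype.card_fin]

lemma unR_card {M : Finset (Fin n × Fin n)} (hM : IsMatching M) :
    (unR M).card = n - M.card := by
  have h1 : unR M = Finset.univ \ M.image Prod.snd := by
    ext v
    simp only [unR, mem_filter, mem_univ, true_and, mem_sdiff, mem_image]
    aesop
  have h2 : (M.image Prod.snd).card = M.card :=
    Finset.card_image_of_injOn (fun e he f hf h => matching_eq_of_snd hM he hf h)
  rw [h1, Finset.card_sdiff_of_subset (Finset.subset_univ _), Finset.card_univ, h2, Fintype.card_fin]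

/-- step relation on heads of lists -/
def stepL (step : Fin n → Finset (Fin n)) : List (Fin n) → Finset (Fin n)
  | [] => ∅
  | x :: _ => step x

/-- Lists following a step relation, of length `s+1`, most recent element first. -/
def chainF (step : Fin n → Finset (Fin n)) : ℕ → Finset (List (Fin n))
  | 0 => Finset.univ.image (fun x => [x])
  | s + 1 => (chainF step s).biUnion
      (fun ℓ => (stepL step ℓ).image (fun x => x :: ℓ))

lemma chainF_card {step : Fin n → Finset (Fin n)} {D : ℕ}
    (hD : ∀ x, (step x).card ≤ D) (s : ℕ) :
    (chainF step s).card ≤ n * D ^ s := by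
  have hDL : ∀ ℓ, (stepL step ℓ).card ≤ D := by
    intro ℓ; cases ℓ with
    | nil => simp [stepL]
    | cons x t => exact hD x
  induction s with
  | zero =>
    simpa [chainF] using (Finset.card_image_le (s := (Finset.univ : Finset (Fin n)))
        (f := fun x => [x])).trans (by simp)
  | succ s ih =>
    calc (chainF step (s+1)).card
        ≤ ∑ ℓ ∈ chainF step s, ((stepL step ℓ).image (fun x => x :: ℓ)).card :=
          Finset.card_biUnion_le
      _ ≤ ∑ ℓ ∈ chainF step s, D := by
          refine Finset.sum_le_sum (fun ℓ _ => ?_)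
          exact (Finset.card_image_le).trans (hDL _)
      _ = (chainF step s).card * D := by rw [Finset.sum_const, smul_eq_mul]
      _ ≤ (n * D ^ s) * D := Nat.mul_le_mul_right _ ih
      _ = n * D ^ (s+1) := by ring

lemma chainF_cons {step : Fin n → Finset (Fin n)} {s : ℕ} {ℓ : List (Fin n)} {x y : Fin n}
    {t : List (Fin n)} (hℓ : ℓ ∈ chainF step s) (hcons : ℓ = y :: t)
    (hx : x ∈ step y) : x :: ℓ ∈ chainF step (s+1) := by
  simp only [chainF, Finset.mem_biUnion, Finset.mem_image]
  exact ⟨ℓ, hℓ, x, by rw [hcons]; exact hx, rfl⟩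

lemma chainF_length {step : Fin n → Finset (Fin n)} {s : ℕ} {ℓ : List (Fin n)}
    (hℓ : ℓ ∈ chainF step s) : ℓ.length = s + 1 := by
  induction s generalizing ℓ with
  | zero =>
    simp only [chainF, Finset.mem_image] at hℓ
    obtain ⟨x, -, rfl⟩ := hℓ
    rfl
  | succ s ih =>
    simp only [chainF, Finset.mem_biUnion, Finset.mem_image] at hℓ
    obtain ⟨ℓ', hℓ', x, -, rfl⟩ := hℓ
    simp [ih hℓ']

end RPM
namespace RPM

open Finset

variable {n : ℕ} {E M : Finset (Fin n × Fin n)}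

lemma altWalk_prefix {r t : ℕ} {a b : ℕ → Fin n} (h : IsAltWalk E M r a b)
    (h1 : 1 ≤ t) (h2 : t ≤ r) : IsAltWalk E M t a b := by
  obtain ⟨-, ha, hb, hE, hM, h0⟩ := h
  exact ⟨h1, fun i hi j hj => ha i (lt_of_lt_of_le hi h2) j (lt_of_lt_of_le hj h2),
    fun i hi j hj => hb i (lt_of_lt_of_le hi h2) j (lt_of_lt_of_le hj h2),
    fun l hl => hE l (lt_of_lt_of_le hl h2),
    fun l hl => hM l (lt_of_lt_of_le hl h2), h0⟩

lemma altReach_mono {L : Finset (Fin n)} {r r' : ℕ} (h : r ≤ r') :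
    altReach E M L r ⊆ altReach E M L r' := by
  intro x hx
  simp only [altReach, mem_filter, mem_univ, true_and] at hx ⊢
  obtain ⟨s, h1, h2, rest⟩ := hx
  exact ⟨s, h1, h2.trans h, rest⟩

lemma mem_altReach_of_walk {L : Finset (Fin n)} {r s : ℕ} {a b : ℕ → Fin n}
    (hw : IsAltWalk E M s a b) (h1 : 1 ≤ s) (h2 : s ≤ r) (h0 : a 0 ∈ L) :
    b (s - 1) ∈ altReach E M L r := by
  simp only [altReach, mem_filter, mem_univ, true_and]
  exact ⟨s, h1, h2, a, b, hw, h0, rfl⟩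

/-- left vertices used by the BFS at stage `s`: unmatched lefts plus partners of
reached right vertices. -/
noncomputable def aSet (E M : Finset (Fin n × Fin n)) (s : ℕ) : Finset (Fin n) :=
  unL M ∪ (M.filter (fun e => e.2 ∈ altReach E M (unL M) s)).image Prod.fst

/-- The key extension step. -/
lemma reach_extend (hM : IsMatching M) {s : ℕ} {x y : Fin n}
    (hx : x ∈ aSet E M s) (hE : (x, y) ∈ E) (hnM : (x, y) ∉ M) :
    y ∈ altReach E M (unL M) (s + 1) := by
  rcases Finset.mem_union.1 hx with hxU | hxP
  · -- x is an unmatched left vertex: a walk of length 1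
    have hw : IsAltWalk E M 1 (fun _ => x) (fun _ => y) := by
      refine ⟨Nat.one_pos, ?_, ?_, ?_, ?_, ?_⟩
      · intro i hi j hj hij; omega
      · intro i hi j hj hij; omega
      · intro l _; exact ⟨hE, hnM⟩
      · intro l hl; omega
      · intro e he
        simp only [unL, mem_filter] at hxU
        exact hxU.2 e he
    exact mem_altReach_of_walk hw le_rfl (by omega) hxU
  · -- x is the partner of a reached right vertex
    simp only [mem_image, mem_filter] at hxP
    obtain ⟨e, ⟨heM, heR⟩, hex⟩ := hxP
    simp only [altReach, mem_filter, mem_univ, true_and] at heR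
    obtain ⟨t, ht1, hts, a, b, hw, ha0, hbt⟩ := heR
    obtain ⟨-, hadist, hbdist, hEw, hMw, h0w⟩ := hw
    by_cases hyin : ∃ i, i < t ∧ b i = y
    · -- y was already reached: take the prefix walk of length i+1
      obtain ⟨i, hit, hbi⟩ := hyin
      have hpre : IsAltWalk E M (i+1) a b :=
        altWalk_prefix ⟨ht1, hadist, hbdist, hEw, hMw, h0w⟩ (by omega) (by omega)
      have := mem_altReach_of_walk (r := s+1) hpre (by omega) (by omega) ha0
      simpa [hbi] using this
    · push_neg at hyin
      -- x itself is fresh among the a's: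
      have hxfresh : ∀ i, i < t → a i ≠ x := by
        intro i hit heq
        rcases Nat.eq_zero_or_pos i with rfl | hipos
        · exact h0w e heM (by rw [hex, heq])
        · have hMi : (a i, b (i-1)) ∈ M := by
            have := hMw (i-1) (by omega)
            rwa [Nat.sub_add_cancel hipos] at this
          have he2 : (a i, b (i-1)) = e :=
            matching_eq_of_fst hM hMi heM (by simp [heq, hex])
          have hbe : b (i-1) = b (t-1) := by
            have : b (i-1) = e.2 := by rw [← he2]
            rw [this, hbt]
          by_cases hh : i - 1 = t - 1
          · omega
          · exact hbdist (i-1) (by omega) (t-1) (by omega) hh hbe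
      -- extend the walk
      set a' : ℕ → Fin n := fun l => if l = t then x else a l with ha'
      set b' : ℕ → Fin n := fun l => if l = t then y else b l with hb'
      have hw' : IsAltWalk E M (t+1) a' b' := by
        refine ⟨by omega, ?_, ?_, ?_, ?_, ?_⟩
        · intro i hi j hj hij
          simp only [ha']
          rcases eq_or_lt_of_le (Nat.le_of_lt_succ hi) with rfl | hi'
          · rw [if_pos rfl, if_neg (by omega)]
            exact fun hc => hxfresh j (by omega) hc.symm
          · rcases eq_or_lt_of_le (Nat.le_of_lt_succ hj) with rfl | hj'
            · rw [if_neg (by omega), if_pos rfl]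
              exact hxfresh i (by omega)
            · rw [if_neg (by omega), if_neg (by omega)]
              exact hadist i hi' j hj' hij
        · intro i hi j hj hij
          simp only [hb']
          rcases eq_or_lt_of_le (Nat.le_of_lt_succ hi) with rfl | hi'
          · rw [if_pos rfl, if_neg (by omega)]
            exact fun hc => hyin j (by omega) hc.symm
          · rcases eq_or_lt_of_le (Nat.le_of_lt_succ hj) with rfl | hj'
            · rw [if_neg (by omega), if_pos rfl]
              exact fun hc => hyin i (by omega) hc
            · rw [if_neg (by omega), if_neg (by omega)]
              exact hbdist i hi' j hj' hij
        · intro l hl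
          simp only [ha', hb']
          rcases eq_or_lt_of_le (Nat.le_of_lt_succ hl) with rfl | hl'
          · rw [if_pos rfl, if_pos rfl]; exact ⟨hE, hnM⟩
          · rw [if_neg (by omega), if_neg (by omega)]; exact hEw l hl'
        · intro l hl
          simp only [ha', hb']
          rcases (by omega : l + 1 = t ∨ l + 1 < t) with hl' | hl'
          · rw [if_pos hl', if_neg (by omega)]
            have hbl : b l = e.2 := by
              have : l = t - 1 := by omega
              rw [this, hbt]
            rw [hbl, ← hex]
            exact heM
          · rw [if_neg (by omega), if_neg (by omega)]; exact hMw l hl'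
        · intro f hf
          simp only [ha', if_neg (by omega : (0:ℕ) ≠ t)]
          exact h0w f hf
      have ha0' : a' 0 ∈ unL M := by
        simp only [ha']
        rw [if_neg (by omega : (0:ℕ) ≠ t)]
        exact ha0
      have := mem_altReach_of_walk (r := s+1) hw' (by omega) (by omega) ha0'
      simpa [hb'] using this

/-- all graph-neighbours of the BFS left set are reached one step later -/
lemma leftN_aSet_subset (hM : IsMatching M) (s : ℕ) :
    leftN E (aSet E M s) ⊆ altReach E M (unL M) (s+1) := by
  intro y hy
  simp only [leftN, mem_image, mem_filter] at hy
  obtain ⟨e, ⟨heE, heA⟩, hey⟩ := hy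
  by_cases heM : e ∈ M
  · -- matching edge: e.2 is already reached (or e.1 ∈ unL, impossible)
    rcases Finset.mem_union.1 heA with hU | hP
    · simp only [unL, mem_filter] at hU
      exact absurd rfl (hU.2 e heM)
    · simp only [mem_image, mem_filter] at hP
      obtain ⟨f, ⟨hfM, hfR⟩, hfe⟩ := hP
      have : f = e := matching_eq_of_fst hM hfM heM hfe
      subst this
      rw [← hey]
      exact altReach_mono (by omega) hfR
  · have : (e.1, e.2) ∈ E := by simpa using heE
    have := reach_extend (E := E) hM heA (by simpa using heE) (by simpa using heM)
    rwa [hey] at this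

/-- complement bound: right-neighbours of unreached right vertices avoid the BFS left set -/
lemma rightN_compl_subset (hM : IsMatching M) (s : ℕ) :
    rightN E (Finset.univ \ altReach E M (unL M) (s+1)) ⊆ Finset.univ \ aSet E M s := by
  intro x hx
  simp only [rightN, mem_image, mem_filter, mem_sdiff, mem_univ, true_and] at hx ⊢
  obtain ⟨e, ⟨heE, heB⟩, hex⟩ := hx
  intro hxA
  by_cases heM : e ∈ M
  · rcases Finset.mem_union.1 hxA with hU | hP
    · simp only [unL, mem_filter] at hU
      exact hU.2 e heM hex
    · simp only [mem_image, mem_filter] at hP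
      obtain ⟨f, ⟨hfM, hfR⟩, hfe⟩ := hP
      have : f = e := matching_eq_of_fst hM hfM heM (by rw [hfe, hex])
      subst this
      exact heB (altReach_mono (by omega) hfR)
  · have heE' : (x, e.2) ∈ E := by rw [← hex]; exact heE
    have hnM' : (x, e.2) ∉ M := by rw [← hex]; exact heM
    exact heB (reach_extend hM hxA heE' hnM')

end RPM
namespace RPM

open Finset

variable {n : ℕ} {E M : Finset (Fin n × Fin n)}

lemma leftN_mono {A A' : Finset (Fin n)} (h : A' ⊆ A) : leftN E A' ⊆ leftN E A := by
  intro y hy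
  simp only [leftN, mem_image, mem_filter] at hy ⊢
  obtain ⟨e, ⟨h1, h2⟩, h3⟩ := hy
  exact ⟨e, ⟨h1, h h2⟩, h3⟩

lemma aSet_card_lb (hM : IsMatching M) (s : ℕ) :
    (unL M).card + (altReach E M (unL M) s).card ≤
      (aSet E M s).card + ((altReach E M (unL M) s) ∩ unR M).card := by
  classical
  set R := altReach E M (unL M) s with hR
  have hdisj : Disjoint (unL M) ((M.filter (fun e => e.2 ∈ R)).image Prod.fst) := by
    rw [Finset.disjoint_left]
    intro x hx hx'
    simp only [mem_image, mem_filter] at hx'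
    obtain ⟨e, ⟨heM, -⟩, hex⟩ := hx'
    simp only [unL, mem_filter] at hx
    exact hx.2 e heM hex
  have hcard : (aSet E M s).card
      = (unL M).card + ((M.filter (fun e => e.2 ∈ R)).image Prod.fst).card := by
    rw [aSet, Finset.card_union_of_disjoint hdisj]
  have himg : ((M.filter (fun e => e.2 ∈ R)).image Prod.fst).card
      = (M.filter (fun e => e.2 ∈ R)).card :=
    Finset.card_image_of_injOn (fun e he f hf h =>
      matching_eq_of_fst hM (Finset.mem_filter.1 he).1 (Finset.mem_filter.1 hf).1 h)
  -- R \ unR M injects into the filtered matching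
  have hinj : (R \ unR M).card ≤ (M.filter (fun e => e.2 ∈ R)).card := by
    have hex : ∀ b ∈ R \ unR M, ∃ e ∈ M, e.2 = b := by
      intro b hb
      rcases Finset.mem_sdiff.1 hb with ⟨-, hb2⟩
      simp only [unR, mem_filter, mem_univ, true_and] at hb2
      push_neg at hb2
      exact hb2
    refine Finset.card_le_card_of_injOn
      (fun b => if h : ∃ e ∈ M, e.2 = b then h.choose else (b, b)) ?_ ?_
    · intro b hb
      have h := hex b hb
      dsimp only
      rw [dif_pos h]
      have h1 := h.choose_spec.1
      have h2 := h.choose_spec.2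
      simp only [mem_coe, mem_filter]
      exact ⟨h1, by rw [h2]; exact (Finset.mem_sdiff.1 hb).1⟩
    · intro b1 hb1 b2 hb2 heq
      have h1 := hex b1 (by simpa using hb1)
      have h2 := hex b2 (by simpa using hb2)
      dsimp only at heq
      rw [dif_pos h1, dif_pos h2] at heq
      rw [← h1.choose_spec.2, ← h2.choose_spec.2, heq]
  have hsd : (R \ unR M).card + (R ∩ unR M).card = R.card :=
    Finset.card_sdiff_add_card_inter _ _
  omega

lemma growth_le {α : ℝ} (hexp : IsExpander E α) (hM : IsMatching M) (s : ℕ)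
    (hA : ((aSet E M s).card : ℝ) ≤ n / 2) :
    (1 + α) * ((aSet E M s).card : ℝ) ≤ ((altReach E M (unL M) (s+1)).card : ℝ) :=
  (hexp.1 _ hA).trans (by
    exact_mod_cast Finset.card_le_card (leftN_aSet_subset hM s))

lemma bridge_le {α : ℝ} (hexp : IsExpander E α) (hM : IsMatching M) (hα : 0 < α)
    (hn : 2 ≤ n) (s : ℕ) (hA : (n : ℝ) / 2 < ((aSet E M s).card : ℝ)) :
    n / 2 + 1 ≤ (altReach E M (unL M) (s+1)).card := by
  have hle : n / 2 ≤ (aSet E M s).card := by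
    by_contra h
    push_neg at h
    have : ((aSet E M s).card : ℝ) < n / 2 := by
      have h2 : ((aSet E M s).card : ℝ) + 1 ≤ ((n / 2 : ℕ) : ℝ) := by exact_mod_cast h
      have h3 : ((n / 2 : ℕ) : ℝ) ≤ (n : ℝ) / 2 := by
        rw [le_div_iff₀ (by norm_num : (0:ℝ) < 2)]
        exact_mod_cast Nat.div_mul_le_self n 2
      linarith
    linarith
  obtain ⟨A', hA'sub, hA'card⟩ := Finset.exists_subset_card_eq hle
  have hA'le : ((A' : Finset (Fin n)).card : ℝ) ≤ (n : ℝ) / 2 := by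
    rw [hA'card]
    rw [le_div_iff₀ (by norm_num : (0:ℝ) < 2)]
    exact_mod_cast Nat.div_mul_le_self n 2
  have hexp' := hexp.1 A' hA'le
  have hsub : leftN E A' ⊆ altReach E M (unL M) (s+1) :=
    (leftN_mono hA'sub).trans (leftN_aSet_subset hM s)
  have hcard : ((leftN E A').card : ℝ) ≤ ((altReach E M (unL M) (s+1)).card : ℝ) := by
    exact_mod_cast Finset.card_le_card hsub
  have hpos : (1 : ℝ) ≤ ((n / 2 : ℕ) : ℝ) := by
    have : 1 ≤ n / 2 := Nat.one_le_div_iff (by norm_num) |>.2 hn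
    exact_mod_cast this
  have : ((n / 2 : ℕ) : ℝ) < ((altReach E M (unL M) (s+1)).card : ℝ) := by
    rw [hA'card] at hexp'
    nlinarith
  have := Nat.cast_lt (α := ℝ) |>.1 this
  omega

lemma compl_le {α : ℝ} (hexp : IsExpander E α) (hM : IsMatching M) (s : ℕ)
    (hB : (n : ℝ) - ((altReach E M (unL M) (s+1)).card : ℝ) ≤ n / 2) :
    (1 + α) * ((n : ℝ) - ((altReach E M (unL M) (s+1)).card : ℝ)) ≤
      (n : ℝ) - ((aSet E M s).card : ℝ) := by
  set R := altReach E M (unL M) (s+1)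
  have hcardB : ((Finset.univ \ R).card : ℝ) = (n : ℝ) - (R.card : ℝ) := by
    rw [Finset.card_sdiff_of_subset (Finset.subset_univ _), Finset.card_univ, Fintype.card_fin]
    have : R.card ≤ n := by
      have := Finset.card_le_univ R
      simpa using this
    push_cast [Nat.cast_sub this]
    ring
  have h1 := hexp.2 (Finset.univ \ R) (by rw [hcardB]; exact hB)
  have h2 : (rightN E (Finset.univ \ R)).card ≤ (Finset.univ \ aSet E M s).card :=
    Finset.card_le_card (rightN_compl_subset hM s)
  have hcardA : ((Finset.univ \ aSet E M s).card : ℝ) = (n : ℝ) - ((aSet E M s).card : ℝ) := by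
    rw [Finset.card_sdiff_of_subset (Finset.subset_univ _), Finset.card_univ, Fintype.card_fin]
    have : (aSet E M s).card ≤ n := by
      have := Finset.card_le_univ (aSet E M s)
      simpa using this
    push_cast [Nat.cast_sub this]
    ring
  calc (1 + α) * ((n : ℝ) - (R.card : ℝ)) = (1 + α) * ((Finset.univ \ R).card : ℝ) := by
        rw [hcardB]
    _ ≤ ((rightN E (Finset.univ \ R)).card : ℝ) := h1
    _ ≤ ((Finset.univ \ aSet E M s).card : ℝ) := by exact_mod_cast h2
    _ = (n : ℝ) - ((aSet E M s).card : ℝ) := hcardA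

lemma unR_card_le (s : ℕ) :
    (unR M).card ≤ (n - (altReach E M (unL M) s).card) + ((altReach E M (unL M) s) ∩ unR M).card := by
  have hsub : unR M ⊆ (Finset.univ \ altReach E M (unL M) s) ∪ ((altReach E M (unL M) s) ∩ unR M) := by
    intro b hb
    by_cases h : b ∈ altReach E M (unL M) s
    · exact Finset.mem_union.2 (Or.inr (Finset.mem_inter.2 ⟨h, hb⟩))
    · exact Finset.mem_union.2 (Or.inl (Finset.mem_sdiff.2 ⟨Finset.mem_univ _, h⟩))
  have := (Finset.card_le_card hsub).trans (Finset.card_union_le _ _)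
  have hcompl : (Finset.univ \ altReach E M (unL M) s).card = n - (altReach E M (unL M) s).card := by
    rw [Finset.card_sdiff_of_subset (Finset.subset_univ _), Finset.card_univ, Fintype.card_fin]
  omega

end RPM
namespace RPM

open Finset

variable {n : ℕ} {E : Finset (Fin n × Fin n)} {α : ℝ}

lemma nhalf_cast_le : ((n / 2 : ℕ) : ℝ) ≤ (n : ℝ) / 2 := by
  rw [le_div_iff₀ (by norm_num : (0:ℝ) < 2)]
  exact_mod_cast Nat.div_mul_le_self n 2

lemma nhalf_cast_ge : ((n : ℝ) - 1) / 2 ≤ ((n / 2 : ℕ) : ℝ) := by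
  rw [div_le_iff₀ (by norm_num : (0:ℝ) < 2)]
  have : n - 1 ≤ 2 * (n / 2) := by omega
  calc (n : ℝ) - 1 ≤ ((2 * (n / 2) : ℕ) : ℝ) := by
        rcases Nat.eq_zero_or_pos n with rfl | hn
        · simp
        · have h1 : ((n - 1 : ℕ) : ℝ) = (n : ℝ) - 1 := by
            push_cast [Nat.cast_sub hn]; ring
          rw [← h1]; exact_mod_cast this
    _ = ((n / 2 : ℕ) : ℝ) * 2 := by push_cast; ring

lemma one_add_alpha_le_four (hn : 2 ≤ n) (hα : 0 < α) (hexp : IsExpander E α) :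
    (1 : ℝ) + α ≤ 4 := by
  obtain ⟨A, -, hAcard⟩ := Finset.exists_subset_card_eq (s := (Finset.univ : Finset (Fin n)))
    (n := n / 2) (by simp [Nat.div_le_self])
  have h1 := hexp.1 A (by rw [hAcard]; exact nhalf_cast_le)
  have h2 : ((leftN E A).card : ℝ) ≤ n := by
    have := Finset.card_le_univ (leftN E A)
    have h3 : (leftN E A).card ≤ n := by simpa using this
    exact_mod_cast h3
  rw [hAcard] at h1
  have hq : ((n / 2 : ℕ) : ℝ) ≥ (n : ℝ) / 4 := by
    have := nhalf_cast_ge (n := n)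
    have hn' : (2 : ℝ) ≤ n := by exact_mod_cast hn
    linarith
  have hpos : (0 : ℝ) < ((n / 2 : ℕ) : ℝ) := by
    have : 1 ≤ n / 2 := Nat.one_le_div_iff (by norm_num) |>.2 hn
    exact_mod_cast Nat.lt_of_lt_of_le Nat.zero_lt_one this
  nlinarith

lemma two_le_delta {Δ : ℕ} (hn : 2 ≤ n) (hα : 0 < α) (hexp : IsExpander E α)
    (hdeg : maxDegLe E Δ) : 2 ≤ Δ := by
  have hpos : 0 < n := by omega
  set v : Fin n := ⟨0, hpos⟩
  have h1 := hexp.1 {v} (by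
    simp only [Finset.card_singleton, Nat.cast_one]
    have : (2:ℝ) ≤ n := by exact_mod_cast hn
    linarith)
  have h2 : leftN E {v} ⊆ (E.filter (fun e => e.1 = v)).image Prod.snd := by
    intro y hy
    simp only [leftN, mem_image, mem_filter, mem_singleton] at hy ⊢
    exact hy
  have h3 : (leftN E {v}).card ≤ Δ :=
    ((Finset.card_le_card h2).trans Finset.card_image_le).trans (hdeg.1 v)
  have h4 : (1:ℝ) + α ≤ Δ := by
    have : ((leftN E {v}).card : ℝ) ≤ Δ := by exact_mod_cast h3
    simpa using h1.trans this
  by_contra h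
  push_neg at h
  have : (Δ : ℝ) ≤ 1 := by
    have : Δ ≤ 1 := by omega
    exact_mod_cast this
  linarith

lemma exists_pow_stage (hα : 0 < α) (c : ℝ) (hc : 1 ≤ c) :
    ∃ s : ℕ, c ≤ (1 + α) ^ s ∧
      (s : ℝ) * Real.log (1 + α) ≤ Real.log c + Real.log (1 + α) := by
  have hy : 0 < Real.log (1 + α) := Real.log_pos (by linarith)
  have hlogc : 0 ≤ Real.log c := Real.log_nonneg hc
  refine ⟨⌈Real.log c / Real.log (1 + α)⌉₊, ?_, ?_⟩
  · have h1 : Real.log c / Real.log (1 + α) ≤ (⌈Real.log c / Real.log (1 + α)⌉₊ : ℝ) :=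
      Nat.le_ceil _
    have h2 : Real.log c ≤ (⌈Real.log c / Real.log (1 + α)⌉₊ : ℝ) * Real.log (1 + α) := by
      rw [← div_le_iff₀ hy] at *
      exact h1
    have h3 : ((1:ℝ) + α) ^ (⌈Real.log c / Real.log (1 + α)⌉₊ : ℕ) =
        Real.exp ((⌈Real.log c / Real.log (1 + α)⌉₊ : ℝ) * Real.log (1 + α)) := by
      rw [← Real.log_pow, Real.exp_log (by positivity)]
    rw [h3]
    calc c = Real.exp (Real.log c) := (Real.exp_log (by linarith)).symm
      _ ≤ _ := Real.exp_le_exp.2 h2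
  · have h1 : (⌈Real.log c / Real.log (1 + α)⌉₊ : ℝ) < Real.log c / Real.log (1 + α) + 1 :=
      Nat.ceil_lt_add_one (by positivity)
    have h2 : (⌈Real.log c / Real.log (1 + α)⌉₊ : ℝ) * Real.log (1 + α) <
        (Real.log c / Real.log (1 + α) + 1) * Real.log (1 + α) := by
      exact mul_lt_mul_of_pos_right h1 hy
    have h3 : (Real.log c / Real.log (1 + α) + 1) * Real.log (1 + α)
        = Real.log c + Real.log (1 + α) := by
      field_simp
    linarith

end RPM
namespace RPM

open Finset

variable {n : ℕ} {E : Finset (Fin n × Fin n)} {α : ℝ}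

set_option maxHeartbeats 3200000 in
lemma main_reach (hn : 2 ≤ n) (hα : 0 < α) (hexp : IsExpander E α)
    {j : ℕ} (hj : j < n) :
    ∃ r : ℕ, 1 ≤ r ∧
      (r : ℝ) * Real.log (1 + α) ≤
        7 * Real.log (2 * Real.exp 1 * n / ((n : ℝ) - j)) ∧
      ∀ M : Finset (Fin n × Fin n), IsMatching M → M.card = j →
        ((n : ℝ) - j) ≤ 8 * (((altReach E M (unL M) r) ∩ unR M).card : ℝ) := by
  have hy : 0 < Real.log (1 + α) := Real.log_pos (by linarith)
  have h4 : (1 : ℝ) + α ≤ 4 := one_add_alpha_le_four hn hα hexp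
  set u : ℝ := (n : ℝ) - j with hu
  have hu1 : (1 : ℝ) ≤ u := by
    have : (j : ℝ) + 1 ≤ n := by exact_mod_cast hj
    simp only [hu]; linarith
  have hupos : (0 : ℝ) < u := by linarith
  have hun : u ≤ n := by
    have : (0:ℝ) ≤ j := Nat.cast_nonneg j
    simp only [hu]; linarith
  have hnpos : (0 : ℝ) < n := by
    have : (2:ℝ) ≤ n := by exact_mod_cast hn
    linarith
  have he2 : (2 : ℝ) ≤ Real.exp 1 := by
    have := Real.add_one_le_exp 1
    linarith
  have hbase_pos : (0 : ℝ) < 2 * Real.exp 1 * n / u := by positivity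
  -- the master quantity
  set Q : ℝ := Real.log (2 * Real.exp 1 * n / u) with hQ
  have hQlog4 : Real.log (1 + α) ≤ Q := by
    have h2e : (4 : ℝ) ≤ 2 * Real.exp 1 * n / u := by
      rw [le_div_iff₀ hupos]
      nlinarith
    calc Real.log (1 + α) ≤ Real.log 4 := by
          apply Real.log_le_log (by linarith) h4
      _ ≤ Q := Real.log_le_log (by norm_num) h2e
  have hge1 : (1 : ℝ) ≤ 8 * n / (7 * u) + 1 := by
    have : (0:ℝ) ≤ 8 * n / (7 * u) := by positivity
    linarith
  obtain ⟨s₁, hs₁pow, hs₁le⟩ := exists_pow_stage hα (8 * n / (7 * u) + 1) hge1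
  obtain ⟨t₁, ht₁pow, ht₁le⟩ := exists_pow_stage hα ((n : ℝ) / u)
    ((one_le_div hupos).2 hun)
  have hlog1 : Real.log (8 * n / (7 * u) + 1) ≤ Q := by
    apply Real.log_le_log (by positivity)
    rw [div_add' _ _ _ (by positivity), div_le_div_iff₀ (by positivity) hupos]
    have hnu : (0:ℝ) < n * u := mul_pos hnpos hupos
    have huu : u * u ≤ n * u := mul_le_mul_of_nonneg_right hun (by linarith)
    nlinarith
  have hlog2 : Real.log ((n : ℝ) / u) ≤ Q := by
    apply Real.log_le_log (by positivity)
    rw [div_le_div_iff₀ hupos hupos]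
    have hnu : (0:ℝ) < n * u := mul_pos hnpos hupos
    nlinarith
  refine ⟨s₁ + t₁ + 3, by omega, ?_, ?_⟩
  · push_cast
    have h5 : (3 : ℝ) * Real.log (1 + α) ≤ 3 * Q := by nlinarith
    nlinarith
  · intro M hM hMcard
    by_contra hcon
    push_neg at hcon
    set r : ℕ := s₁ + t₁ + 3 with hr
    -- running assumption at every stage
    have hrun : ∀ s, s ≤ r → 8 * (((altReach E M (unL M) s) ∩ unR M).card : ℝ) < u := by
      intro s hs
      have hsub : (altReach E M (unL M) s) ∩ unR M ⊆ (altReach E M (unL M) r) ∩ unR M :=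
        Finset.inter_subset_inter (altReach_mono hs) le_rfl
      have := Finset.card_le_card hsub
      have h8 : (((altReach E M (unL M) s) ∩ unR M).card : ℝ) ≤
          (((altReach E M (unL M) r) ∩ unR M).card : ℝ) := by exact_mod_cast this
      linarith
    have hUcard : ((unL M).card : ℝ) = u := by
      rw [unL_card hM, hMcard]
      push_cast [Nat.cast_sub hj.le]
      rfl
    have hLmono : ∀ s s' : ℕ, s ≤ s' →
        ((altReach E M (unL M) s).card : ℝ) ≤ ((altReach E M (unL M) s').card : ℝ) := by
      intro s s' hss
      exact_mod_cast Finset.card_le_card (altReach_mono hss)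
    have hLle : ∀ s : ℕ, ((altReach E M (unL M) s).card : ℝ) ≤ n := by
      intro s
      have := Finset.card_le_univ (altReach E M (unL M) s)
      have h' : (altReach E M (unL M) s).card ≤ n := by simpa using this
      exact_mod_cast h'
    -- F1 : the BFS left set is large
    have hF1 : ∀ s, s ≤ r →
        ((altReach E M (unL M) s).card : ℝ) + 7 * u / 8 ≤ ((aSet E M s).card : ℝ) := by
      intro s hs
      have hnat := aSet_card_lb (E := E) hM s
      have hcast : ((unL M).card : ℝ) + ((altReach E M (unL M) s).card : ℝ) ≤
          ((aSet E M s).card : ℝ) + (((altReach E M (unL M) s) ∩ unR M).card : ℝ) := by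
        exact_mod_cast hnat
      have := hrun s hs
      rw [hUcard] at hcast
      linarith
    -- Claim 1 : growth up to half
    have hclaim1 : ∀ s, s ≤ r →
        min (((1 + α) ^ s - 1) * (7 * u / 8)) (((n / 2 : ℕ) : ℝ) + 1) ≤
          ((altReach E M (unL M) s).card : ℝ) := by
      intro s
      induction s with
      | zero =>
        intro _
        refine (min_le_left _ _).trans ?_
        simp only [pow_zero]
        have : (0:ℝ) ≤ ((altReach E M (unL M) 0).card : ℝ) := Nat.cast_nonneg _
        linarith
      | succ s ih =>
        intro hs
        have hs' : s ≤ r := by omega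
        have ihs := ih hs'
        by_cases hA : ((aSet E M s).card : ℝ) ≤ (n : ℝ) / 2
        · have hg := growth_le hexp hM s hA
          have hF1s := hF1 s hs'
          rcases min_cases (((1 + α) ^ s - 1) * (7 * u / 8)) (((n / 2 : ℕ) : ℝ) + 1) with
            ⟨hmeq, -⟩ | ⟨hmeq, -⟩
          · rw [hmeq] at ihs
            refine (min_le_left _ _).trans ?_
            have hpow : (0:ℝ) < (1 + α) ^ s := by positivity
            have key : (1 + α) ^ (s + 1) * (7 * u / 8) ≤
                ((altReach E M (unL M) (s+1)).card : ℝ) := by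
              have h1 : ((1 + α) ^ s - 1) * (7 * u / 8) + 7 * u / 8 ≤
                  ((aSet E M s).card : ℝ) := by linarith
              have h2 : (1 + α) * (((1 + α) ^ s - 1) * (7 * u / 8) + 7 * u / 8) ≤
                  (1 + α) * ((aSet E M s).card : ℝ) := by nlinarith
              have h3 : (1 + α) * (((1 + α) ^ s - 1) * (7 * u / 8) + 7 * u / 8)
                  = (1 + α) ^ (s + 1) * (7 * u / 8) := by ring
              linarith
            have : ((1 + α) ^ (s+1) - 1) * (7 * u / 8) ≤ (1 + α) ^ (s + 1) * (7 * u / 8) := by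
              nlinarith
            linarith
          · rw [hmeq] at ihs
            refine (min_le_right _ _).trans (ihs.trans (hLmono s (s+1) (by omega)))
        · push_neg at hA
          have hb := bridge_le hexp hM hα hn s hA
          refine (min_le_right _ _).trans ?_
          exact_mod_cast hb
    -- after stage s₁ the reach is more than half
    have hmid : ∀ s, s₁ ≤ s → s ≤ r →
        ((n / 2 : ℕ) : ℝ) + 1 ≤ ((altReach E M (unL M) s).card : ℝ) := by
      intro s hs1 hsr
      have h1 := hclaim1 s₁ (by omega)
      have hval : ((n / 2 : ℕ) : ℝ) + 1 ≤ ((1 + α) ^ s₁ - 1) * (7 * u / 8) := by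
        have hp : 8 * n / (7 * u) ≤ (1 + α) ^ s₁ - 1 := by linarith
        have h2 : (8 * n / (7 * u)) * (7 * u / 8) = n := by
          field_simp
        have h3 : (n : ℝ) ≤ ((1 + α) ^ s₁ - 1) * (7 * u / 8) := by
          rw [← h2]
          apply mul_le_mul_of_nonneg_right hp (by linarith)
        have h4 : ((n / 2 : ℕ) : ℝ) + 1 ≤ n := by
          have := nhalf_cast_le (n := n)
          have h5 : (2:ℝ) ≤ n := by exact_mod_cast hn
          linarith
        linarith
      have hm : ((n / 2 : ℕ) : ℝ) + 1 ≤ ((altReach E M (unL M) s₁).card : ℝ) := by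
        rcases min_cases (((1 + α) ^ s₁ - 1) * (7 * u / 8)) (((n / 2 : ℕ) : ℝ) + 1) with
          ⟨hmeq, -⟩ | ⟨hmeq, -⟩ <;> rw [hmeq] at h1 <;> linarith
      exact hm.trans (hLmono s₁ s hs1)
    have hhalf : ∀ s, s₁ ≤ s → s ≤ r →
        (n : ℝ) - ((altReach E M (unL M) s).card : ℝ) ≤ (n : ℝ) / 2 := by
      intro s hs1 hsr
      have h1 := hmid s hs1 hsr
      have h2 := nhalf_cast_ge (n := n)
      linarith
    -- Claim 2 : complement shrinks geometrically
    have hclaim2 : ∀ t, s₁ + t ≤ r →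
        (n : ℝ) - ((altReach E M (unL M) (s₁ + t)).card : ℝ) - 7 * u / 8 ≤
          (n : ℝ) / (1 + α) ^ t := by
      intro t
      induction t with
      | zero =>
        intro _
        simp only [pow_zero, div_one, Nat.add_zero]
        have h0 : (0:ℝ) ≤ ((altReach E M (unL M) s₁).card : ℝ) := Nat.cast_nonneg _
        linarith
      | succ t ih =>
        intro hs
        have hs' : s₁ + t ≤ r := by omega
        have ihs := ih hs'
        have hB : (n : ℝ) - ((altReach E M (unL M) (s₁ + t + 1)).card : ℝ) ≤ (n : ℝ) / 2 :=
          hhalf (s₁ + t + 1) (by omega) (by omega)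
        have hc := compl_le hexp hM (s₁ + t) hB
        have hF1s := hF1 (s₁ + t) hs'
        have h1 : (1 + α) * ((n : ℝ) - ((altReach E M (unL M) (s₁ + t + 1)).card : ℝ)) ≤
            (n : ℝ) / (1 + α) ^ t := by
          calc (1 + α) * ((n : ℝ) - ((altReach E M (unL M) (s₁ + t + 1)).card : ℝ))
              ≤ (n : ℝ) - ((aSet E M (s₁ + t)).card : ℝ) := hc
            _ ≤ (n : ℝ) - ((altReach E M (unL M) (s₁ + t)).card : ℝ) - 7 * u / 8 := by
                linarith
            _ ≤ (n : ℝ) / (1 + α) ^ t := ihs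
        have hppos : (0:ℝ) < (1 + α) ^ t := by positivity
        have h2 : (n : ℝ) - ((altReach E M (unL M) (s₁ + t + 1)).card : ℝ) ≤
            (n : ℝ) / (1 + α) ^ (t + 1) := by
          rw [pow_succ]
          rw [div_mul_eq_div_div]
          rw [le_div_iff₀ (by linarith : (0:ℝ) < 1 + α)]
          calc ((n : ℝ) - ((altReach E M (unL M) (s₁ + t + 1)).card : ℝ)) * (1 + α)
              = (1 + α) * ((n : ℝ) - ((altReach E M (unL M) (s₁ + t + 1)).card : ℝ)) := by ring
            _ ≤ (n : ℝ) / (1 + α) ^ t := h1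
        have h7u : (0:ℝ) ≤ 7 * u / 8 := by linarith
        have : s₁ + (t + 1) = s₁ + t + 1 := by omega
        rw [this]
        linarith
    -- endgame
    have hT : (n : ℝ) / (1 + α) ^ t₁ ≤ u := by
      rw [div_le_iff₀ (by positivity)]
      calc (n : ℝ) = ((n:ℝ)/u) * u := by field_simp
        _ ≤ (1 + α) ^ t₁ * u := by
            apply mul_le_mul_of_nonneg_right ht₁pow (by linarith)
        _ = u * (1 + α) ^ t₁ := by ring
    have hd0 : (n : ℝ) - ((altReach E M (unL M) (s₁ + t₁)).card : ℝ) ≤ 15 * u / 8 := by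
      have := hclaim2 t₁ (by omega)
      linarith
    have hstep : ∀ s, s₁ ≤ s → s + 1 ≤ r →
        (1 + α) * ((n : ℝ) - ((altReach E M (unL M) (s + 1)).card : ℝ)) ≤
          (n : ℝ) - ((altReach E M (unL M) s).card : ℝ) - 7 * u / 8 := by
      intro s hs1 hsr
      have hB : (n : ℝ) - ((altReach E M (unL M) (s + 1)).card : ℝ) ≤ (n : ℝ) / 2 :=
        hhalf (s + 1) (by omega) hsr
      have hc := compl_le hexp hM s hB
      have hF1s := hF1 s (by omega)
      linarith
    have hone : (1:ℝ) ≤ 1 + α := by linarith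
    have hd1 : (n : ℝ) - ((altReach E M (unL M) (s₁ + t₁ + 1)).card : ℝ) ≤ u := by
      have h := hstep (s₁ + t₁) (by omega) (by omega)
      have hnn : (0:ℝ) ≤ (n : ℝ) - ((altReach E M (unL M) (s₁ + t₁ + 1)).card : ℝ) := by
        have := hLle (s₁ + t₁ + 1); linarith
      nlinarith
    have hd2 : (n : ℝ) - ((altReach E M (unL M) (s₁ + t₁ + 2)).card : ℝ) ≤ u / 8 := by
      have h := hstep (s₁ + t₁ + 1) (by omega) (by omega)
      have hnn : (0:ℝ) ≤ (n : ℝ) - ((altReach E M (unL M) (s₁ + t₁ + 2)).card : ℝ) := by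
        have := hLle (s₁ + t₁ + 2); linarith
      nlinarith
    -- but the unmatched right vertices are mostly unreached : contradiction
    have hlb := unR_card_le (E := E) (M := M) (s₁ + t₁ + 2)
    have hw := hrun (s₁ + t₁ + 2) (by omega)
    have hcastlb : ((unR M).card : ℝ) ≤
        ((n : ℝ) - ((altReach E M (unL M) (s₁ + t₁ + 2)).card : ℝ)) +
          (((altReach E M (unL M) (s₁ + t₁ + 2)) ∩ unR M).card : ℝ) := by
      have hcle : (altReach E M (unL M) (s₁ + t₁ + 2)).card ≤ n := by
        have := Finset.card_le_univ (altReach E M (unL M) (s₁ + t₁ + 2))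
        simpa using this
      have h1 : ((unR M).card : ℝ) ≤
          (((n - (altReach E M (unL M) (s₁ + t₁ + 2)).card : ℕ)) : ℝ) +
            (((altReach E M (unL M) (s₁ + t₁ + 2)) ∩ unR M).card : ℝ) := by
        exact_mod_cast hlb
      have h2 : (((n - (altReach E M (unL M) (s₁ + t₁ + 2)).card : ℕ)) : ℝ)
          = (n : ℝ) - ((altReach E M (unL M) (s₁ + t₁ + 2)).card : ℝ) := by
        exact Nat.cast_sub hcle
      linarith
    have hunR : ((unR M).card : ℝ) = u := by
      rw [unR_card hM, hMcard]
      push_cast [Nat.cast_sub hj.le]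
      rfl
    rw [hunR] at hcastlb
    linarith

end RPM
namespace RPM

open Finset

variable {n : ℕ} {E M : Finset (Fin n × Fin n)}

/-- the non-matching edges of the walk -/
def wAdd (t : ℕ) (a b : ℕ → Fin n) : Finset (Fin n × Fin n) :=
  (Finset.range t).image (fun l => (a l, b l))

/-- the matching edges of the walk -/
def wDel (t : ℕ) (a b : ℕ → Fin n) : Finset (Fin n × Fin n) :=
  (Finset.range (t-1)).image (fun l => (a (l+1), b l))

/-- augmenting `M` along the path -/
def augment (M : Finset (Fin n × Fin n)) (t : ℕ) (a b : ℕ → Fin n) :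
    Finset (Fin n × Fin n) :=
  (M \ wDel t a b) ∪ wAdd t a b

section AugFacts

variable {t : ℕ} {a b : ℕ → Fin n}

lemma mem_wAdd_iff {e : Fin n × Fin n} :
    e ∈ wAdd t a b ↔ ∃ l < t, e = (a l, b l) := by
  simp only [wAdd, mem_image, mem_range]
  constructor
  · rintro ⟨l, h1, h2⟩; exact ⟨l, h1, h2.symm⟩
  · rintro ⟨l, h1, h2⟩; exact ⟨l, h1, h2.symm⟩

lemma mem_wDel_iff {e : Fin n × Fin n} :
    e ∈ wDel t a b ↔ ∃ l < t - 1, e = (a (l+1), b l) := by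
  simp only [wDel, mem_image, mem_range]
  constructor
  · rintro ⟨l, h1, h2⟩; exact ⟨l, h1, h2.symm⟩
  · rintro ⟨l, h1, h2⟩; exact ⟨l, h1, h2.symm⟩

variable (hw : IsAltWalk E M t a b)

include hw

lemma wDel_subset : wDel t a b ⊆ M := by
  intro e he
  rw [mem_wDel_iff] at he
  obtain ⟨l, hl, rfl⟩ := he
  exact hw.2.2.2.2.1 l (by omega)

lemma wAdd_disj : ∀ e ∈ wAdd t a b, e ∉ M := by
  intro e he
  rw [mem_wAdd_iff] at he
  obtain ⟨l, hl, rfl⟩ := he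
  exact (hw.2.2.2.1 l hl).2

lemma wAdd_subset_E : wAdd t a b ⊆ E := by
  intro e he
  rw [mem_wAdd_iff] at he
  obtain ⟨l, hl, rfl⟩ := he
  exact (hw.2.2.2.1 l hl).1

lemma wAdd_card : (wAdd t a b).card = t := by
  rw [wAdd, Finset.card_image_of_injOn, Finset.card_range]
  intro i hi j hj hij
  simp only [mem_coe, mem_range] at hi hj
  by_contra hne
  exact hw.2.1 i hi j hj hne (congrArg Prod.fst hij)

lemma wDel_card : (wDel t a b).card = t - 1 := by
  rw [wDel, Finset.card_image_of_injOn, Finset.card_range]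
  intro i hi j hj hij
  simp only [mem_coe, mem_range] at hi hj
  by_contra hne
  exact hw.2.2.1 i (by omega) j (by omega) hne (congrArg Prod.snd hij)

lemma augment_card (hM : IsMatching M) : (augment M t a b).card = M.card + 1 := by
  have h1 : (M \ wDel t a b).card = M.card - (t-1) := by
    rw [Finset.card_sdiff_of_subset (wDel_subset hw), wDel_card hw]
  have h2 : Disjoint (M \ wDel t a b) (wAdd t a b) := by
    rw [Finset.disjoint_right]
    intro e he
    simp only [mem_sdiff]
    intro hc
    exact wAdd_disj hw e he hc.1
  have h3 : t - 1 ≤ M.card := by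
    have := Finset.card_le_card (wDel_subset hw)
    rwa [wDel_card hw] at this
  have ht := hw.1
  rw [augment, Finset.card_union_of_disjoint h2, h1, wAdd_card hw]
  omega

lemma augment_subset (hME : M ⊆ E) : augment M t a b ⊆ E :=
  Finset.union_subset ((Finset.sdiff_subset).trans hME) (wAdd_subset_E hw)

lemma wAdd_subset_augment : wAdd t a b ⊆ augment M t a b :=
  Finset.subset_union_right

lemma augment_recover : M = (augment M t a b \ wAdd t a b) ∪ wDel t a b := by
  have h1 := wDel_subset hw
  have h2 := wAdd_disj hw
  ext e
  have h1e : e ∈ wDel t a b → e ∈ M := fun h => h1 h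
  have h2e : e ∈ wAdd t a b → e ∉ M := h2 e
  simp only [augment, mem_union, mem_sdiff]
  tauto

/-- the new edge set is again a matching, provided the walk ends at an unmatched
right vertex -/
lemma augment_matching (hM : IsMatching M) (hend : ∀ e ∈ M, e.2 ≠ b (t - 1)) :
    IsMatching (augment M t a b) := by
  obtain ⟨ht, hadist, hbdist, hEw, hMw, h0w⟩ := hw
  -- key half-statement: an added edge conflicts with no old surviving edge
  have key : ∀ l, l < t → ∀ f ∈ M, f ∉ wDel t a b → a l ≠ f.1 ∧ b l ≠ f.2 := by
    intro l hl f hfM hfD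
    constructor
    · intro hc
      rcases Nat.eq_zero_or_pos l with rfl | hlpos
      · exact h0w f hfM hc.symm
      · have hMl : (a l, b (l-1)) ∈ M := by
          have := hMw (l-1) (by omega)
          rwa [Nat.sub_add_cancel hlpos] at this
        have : f = (a l, b (l-1)) := matching_eq_of_fst hM hfM hMl (by rw [← hc])
        apply hfD
        rw [mem_wDel_iff]
        exact ⟨l - 1, by omega, by rw [this, Nat.sub_add_cancel hlpos]⟩
    · intro hc
      by_cases hlast : l = t - 1
      · exact hend f hfM (by rw [← hc, hlast])
      · have hMl : (a (l+1), b l) ∈ M := hMw l (by omega)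
        have : f = (a (l+1), b l) := matching_eq_of_snd hM hfM hMl (by rw [← hc])
        apply hfD
        rw [mem_wDel_iff]
        exact ⟨l, by omega, this⟩
  intro e he f hf hef
  rcases Finset.mem_union.1 he with heM | heA <;> rcases Finset.mem_union.1 hf with hfM | hfA
  · exact hM e (Finset.mem_sdiff.1 heM).1 f (Finset.mem_sdiff.1 hfM).1 hef
  · obtain ⟨l, hl, rfl⟩ := mem_wAdd_iff.1 hfA
    have := key l hl e (Finset.mem_sdiff.1 heM).1 (Finset.mem_sdiff.1 heM).2
    exact ⟨fun hc => this.1 hc.symm, fun hc => this.2 hc.symm⟩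
  · obtain ⟨l, hl, rfl⟩ := mem_wAdd_iff.1 heA
    exact key l hl f (Finset.mem_sdiff.1 hfM).1 (Finset.mem_sdiff.1 hfM).2
  · obtain ⟨l, hl, rfl⟩ := mem_wAdd_iff.1 heA
    obtain ⟨l', hl', rfl⟩ := mem_wAdd_iff.1 hfA
    have hll' : l ≠ l' := by
      intro hc; subst hc; exact hef rfl
    exact ⟨hadist l hl l' hl' hll', hbdist l hl l' hl' hll'⟩

end AugFacts

end RPM
namespace RPM

open Finset

variable {n : ℕ}

/-- two-step neighbourhood (plus the vertex itself) -/
def tStep (E : Finset (Fin n × Fin n)) (x : Fin n) : Finset (Fin n) :=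
  insert x (((E.filter (fun e => e.1 = x)).image Prod.snd).biUnion
    (fun b => (E.filter (fun e => e.2 = b)).image Prod.fst))

lemma tStep_card {E : Finset (Fin n × Fin n)} {Δ : ℕ} (hdeg : maxDegLe E Δ) (x : Fin n) :
    (tStep E x).card ≤ Δ * Δ + 1 := by
  have h1 : (((E.filter (fun e => e.1 = x)).image Prod.snd).biUnion
      (fun b => (E.filter (fun e => e.2 = b)).image Prod.fst)).card ≤ Δ * Δ := by
    calc _ ≤ ∑ b ∈ (E.filter (fun e => e.1 = x)).image Prod.snd,
            ((E.filter (fun e => e.2 = b)).image Prod.fst).card := Finset.card_biUnion_le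
      _ ≤ ∑ b ∈ (E.filter (fun e => e.1 = x)).image Prod.snd, Δ := by
          refine Finset.sum_le_sum (fun b _ => ?_)
          exact Finset.card_image_le.trans (hdeg.2 b)
      _ = ((E.filter (fun e => e.1 = x)).image Prod.snd).card * Δ := by
          rw [Finset.sum_const, smul_eq_mul]
      _ ≤ Δ * Δ :=
          Nat.mul_le_mul_right _ (Finset.card_image_le.trans (hdeg.1 x))
  calc (tStep E x).card ≤ _ + 1 := Finset.card_insert_le _ _
    _ ≤ Δ * Δ + 1 := by omega

lemma self_mem_tStep {E : Finset (Fin n × Fin n)} (x : Fin n) : x ∈ tStep E x :=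
  Finset.mem_insert_self _ _

lemma mem_tStep {E : Finset (Fin n × Fin n)} {x x' y : Fin n}
    (h1 : (x, y) ∈ E) (h2 : (x', y) ∈ E) : x' ∈ tStep E x := by
  apply Finset.mem_insert_of_mem
  rw [Finset.mem_biUnion]
  refine ⟨y, ?_, ?_⟩
  · rw [Finset.mem_image]; exact ⟨(x,y), Finset.mem_filter.2 ⟨h1, rfl⟩, rfl⟩
  · rw [Finset.mem_image]; exact ⟨(x',y), Finset.mem_filter.2 ⟨h2, rfl⟩, rfl⟩

/-- partner function of a matching -/
noncomputable def pfn (M' : Finset (Fin n × Fin n)) (x : Fin n) : Fin n :=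
  if h : ((M'.filter (fun f => f.1 = x)).image Prod.snd).Nonempty then
    ((M'.filter (fun f => f.1 = x)).image Prod.snd).min' (by exact h) else x

lemma pfn_eq {M' : Finset (Fin n × Fin n)} (hM' : IsMatching M') {x y : Fin n}
    (hxy : (x, y) ∈ M') : pfn M' x = y := by
  have himg : (M'.filter (fun f => f.1 = x)).image Prod.snd = {y} := by
    ext c
    simp only [mem_image, mem_filter, mem_singleton]
    constructor
    · rintro ⟨f, ⟨hfM, hfx⟩, rfl⟩
      have : f = (x, y) := matching_eq_of_fst hM' hfM hxy hfx
      rw [this]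
    · rintro rfl
      exact ⟨(x, _), ⟨hxy, rfl⟩, rfl⟩
  rw [pfn]
  have hne : ((M'.filter (fun f => f.1 = x)).image Prod.snd).Nonempty := by
    rw [himg]; exact ⟨y, Finset.mem_singleton_self y⟩
  rw [dif_pos hne]
  exact Finset.mem_singleton.1 (by rw [← himg]; exact Finset.min'_mem _ hne)

/-- the padded list of left vertices of a walk, length `r+1`, most recent first -/
def wlist (a' : ℕ → Fin n) : ℕ → List (Fin n)
  | 0 => [a' 0]
  | i + 1 => a' (i+1) :: wlist a' i

lemma wlist_cons (a' : ℕ → Fin n) (i : ℕ) :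
    ∃ tl, wlist a' i = a' i :: tl := by
  cases i with
  | zero => exact ⟨[], rfl⟩
  | succ i => exact ⟨wlist a' i, rfl⟩

lemma wlist_getD (a' : ℕ → Fin n) (z : Fin n) :
    ∀ r l, l ≤ r → (wlist a' r).getD (r - l) z = a' l := by
  intro r
  induction r with
  | zero =>
    intro l hl
    interval_cases l
    rfl
  | succ r ih =>
    intro l hl
    rcases Nat.eq_or_lt_of_le hl with rfl | hlt
    · simp [wlist]
    · have h1 : r + 1 - l = (r - l) + 1 := by omega
      rw [h1]
      show (wlist a' r).getD (r - l) z = a' l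
      exact ih l (by omega)

lemma wlist_mem_chainF {E M : Finset (Fin n × Fin n)} {t : ℕ} {a b : ℕ → Fin n}
    (hME : M ⊆ E) (hw : IsAltWalk E M t a b) (r : ℕ) :
    wlist (fun i => a (min i (t-1))) r ∈ chainF (tStep E) r := by
  obtain ⟨ht, -, -, hEw, hMw, -⟩ := hw
  induction r with
  | zero =>
    simp only [chainF, Finset.mem_image]
    exact ⟨a (min 0 (t-1)), Finset.mem_univ _, rfl⟩
  | succ r ih =>
    obtain ⟨tl, htl⟩ := wlist_cons (fun i => a (min i (t-1))) r
    refine chainF_cons ih htl ?_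
    by_cases hlt : r + 1 ≤ t - 1
    · have h1 : min (r+1) (t-1) = r + 1 := by omega
      have h2 : min r (t-1) = r := by omega
      show a (min (r+1) (t-1)) ∈ tStep E (a (min r (t-1)))
      rw [h1, h2]
      have hE1 : (a r, b r) ∈ E := (hEw r (by omega)).1
      have hE2 : (a (r+1), b r) ∈ E := hME (hMw r (by omega))
      exact mem_tStep hE1 hE2
    · have h1 : min (r+1) (t-1) = t - 1 := by omega
      have h2 : min r (t-1) = t - 1 := by omega
      show a (min (r+1) (t-1)) ∈ tStep E (a (min r (t-1)))
      rw [h1, h2]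
      exact self_mem_tStep _

end RPM
namespace RPM

open Finset

variable {n : ℕ}

noncomputable def mSet (E : Finset (Fin n × Fin n)) (j : ℕ) :
    Finset (Finset (Fin n × Fin n)) :=
  E.powerset.filter (fun M => IsMatching M ∧ M.card = j)

lemma mSet_card (E : Finset (Fin n × Fin n)) (j : ℕ) :
    (mSet E j).card = numMatchings E j := rfl

set_option maxHeartbeats 1600000 in
lemma step_count {E : Finset (Fin n × Fin n)} {Δ j r : ℕ} (hdeg : maxDegLe E Δ)
    (hj : j < n) (hr : 1 ≤ r)
    (hreach : ∀ M : Finset (Fin n × Fin n), IsMatching M → M.card = j →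
      ((n : ℝ) - j) ≤ 8 * (((altReach E M (unL M) r) ∩ unR M).card : ℝ)) :
    (n - j) * numMatchings E j ≤
      8 * ((r + 1) * (n * (Δ * Δ + 1) ^ r)) * numMatchings E (j+1) := by
  classical
  set pairs : Finset (Σ _ : Finset (Fin n × Fin n), Fin n) :=
    (mSet E j).sigma (fun M => (altReach E M (unL M) r) ∩ unR M) with hpairs
  -- lower bound on the number of pairs
  have hlow : (n - j) * (mSet E j).card ≤ 8 * pairs.card := by
    rw [hpairs, Finset.card_sigma, Finset.mul_sum]
    rw [mul_comm (n-j) (mSet E j).card, ← smul_eq_mul, ← Finset.sum_const]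
    refine Finset.sum_le_sum (fun M hM => ?_)
    simp only [mSet, Finset.mem_filter, Finset.mem_powerset] at hM
    have h := hreach M hM.2.1 hM.2.2
    have hcast : ((n - j : ℕ) : ℝ) = (n : ℝ) - j := by
      push_cast [Nat.cast_sub hj.le]; ring
    have : ((n - j : ℕ) : ℝ) ≤ ((8 * ((altReach E M (unL M) r ∩ unR M).card) : ℕ) : ℝ) := by
      push_cast
      rw [hcast]
      exact h
    exact_mod_cast this
  -- the data giving membership in `pairs`
  set P : (Σ _ : Finset (Fin n × Fin n), Fin n) → (ℕ × ((ℕ → Fin n) × (ℕ → Fin n))) → Prop :=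
    fun p q => (1 ≤ q.1 ∧ q.1 ≤ r) ∧ IsAltWalk E p.1 q.1 q.2.1 q.2.2 ∧
      q.2.1 0 ∈ unL p.1 ∧ q.2.2 (q.1 - 1) = p.2 with hP
  have hmemP : ∀ p ∈ pairs, ∃ q, P p q := by
    rintro ⟨M, w⟩ hp
    rw [hpairs, Finset.mem_sigma] at hp
    obtain ⟨hM, hw⟩ := hp
    rw [Finset.mem_inter] at hw
    have := hw.1
    simp only [altReach, Finset.mem_filter, Finset.mem_univ, true_and] at this
    obtain ⟨s, hs1, hsr, a, b, hwalk, ha0, hb⟩ := this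
    exact ⟨(s, (a, b)), ⟨hs1, hsr⟩, hwalk, ha0, hb⟩
  have hpairs_mem : ∀ p ∈ pairs, p.1 ⊆ E ∧ IsMatching p.1 ∧ p.1.card = j ∧ p.2 ∈ unR p.1 := by
    rintro ⟨M, w⟩ hp
    rw [hpairs, Finset.mem_sigma] at hp
    obtain ⟨hM, hw⟩ := hp
    simp only [mSet, Finset.mem_filter, Finset.mem_powerset] at hM
    exact ⟨hM.1, hM.2.1, hM.2.2, (Finset.mem_inter.1 hw).2⟩
  -- the encoding map
  set enc : (Σ _ : Finset (Fin n × Fin n), Fin n) →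
      (Finset (Fin n × Fin n) × (ℕ × List (Fin n))) :=
    fun p => if h : ∃ q, P p q then
      (augment p.1 h.choose.1 h.choose.2.1 h.choose.2.2,
        (h.choose.1, wlist (fun i => h.choose.2.1 (min i (h.choose.1 - 1))) r))
    else (∅, (0, [])) with henc
  set target : Finset (Finset (Fin n × Fin n) × (ℕ × List (Fin n))) :=
    mSet E (j+1) ×ˢ ((Finset.range (r+1)) ×ˢ chainF (tStep E) r) with htarget
  have hmaps : ∀ p ∈ pairs, enc p ∈ target := by
    intro p hp
    have h := hmemP p hp
    obtain ⟨hME, hM, hMcard, hwunR⟩ := hpairs_mem p hp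
    rw [henc]
    simp only
    rw [dif_pos h]
    have hq := h.choose_spec
    obtain ⟨⟨hq1, hq2⟩, hwalk, ha0, hbend⟩ := hq
    have hend : ∀ e ∈ p.1, e.2 ≠ h.choose.2.2 (h.choose.1 - 1) := by
      intro e he
      rw [hbend]
      simp only [unR, Finset.mem_filter] at hwunR
      exact hwunR.2 e he
    rw [htarget, Finset.mem_product, Finset.mem_product]
    refine ⟨?_, ?_, ?_⟩
    · simp only [mSet, Finset.mem_filter, Finset.mem_powerset]
      exact ⟨augment_subset hwalk hME, augment_matching hwalk hM hend,
        by rw [augment_card hwalk hM, hMcard]⟩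
    · simp only [Finset.mem_range]; omega
    · exact wlist_mem_chainF hME hwalk r
  have hinj : Set.InjOn enc pairs := by
    rintro p1 hp1 p2 hp2 heq
    have h1 := hmemP p1 hp1
    have h2 := hmemP p2 hp2
    obtain ⟨hME1, hM1, hMcard1, hwunR1⟩ := hpairs_mem p1 hp1
    obtain ⟨hME2, hM2, hMcard2, hwunR2⟩ := hpairs_mem p2 hp2
    rw [henc] at heq
    simp only at heq
    rw [dif_pos h1, dif_pos h2] at heq
    obtain ⟨⟨hq11, hq12⟩, hwalk1, ha01, hbend1⟩ := h1.choose_spec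
    obtain ⟨⟨hq21, hq22⟩, hwalk2, ha02, hbend2⟩ := h2.choose_spec
    set t1 := h1.choose.1
    set a1 := h1.choose.2.1
    set b1 := h1.choose.2.2
    set t2 := h2.choose.1
    set a2 := h2.choose.2.1
    set b2 := h2.choose.2.2
    have hA : augment p1.1 t1 a1 b1 = augment p2.1 t2 a2 b2 :=
      congrArg (fun z => z.1) heq
    have ht : t1 = t2 := congrArg (fun z => z.2.1) heq
    have hL : wlist (fun i => a1 (min i (t1 - 1))) r = wlist (fun i => a2 (min i (t2 - 1))) r :=
      congrArg (fun z => z.2.2) heq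
    -- extract equality of the `a` vertices
    have ha : ∀ l, l < t1 → a1 l = a2 l := by
      intro l hl
      have hlr : l ≤ r := by omega
      have e1 := wlist_getD (fun i => a1 (min i (t1 - 1))) (a1 0) r l hlr
      have e2 := wlist_getD (fun i => a2 (min i (t2 - 1))) (a1 0) r l hlr
      rw [hL] at e1
      rw [e2] at e1
      have hm1 : min l (t1 - 1) = l := by omega
      have hm2 : min l (t2 - 1) = l := by omega
      rw [hm1, hm2] at e1
      exact e1.symm
    -- the augmented matching
    have hMaug : IsMatching (augment p1.1 t1 a1 b1) := by
      refine augment_matching hwalk1 hM1 ?_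
      intro e he
      rw [hbend1]
      simp only [unR, Finset.mem_filter] at hwunR1
      exact hwunR1.2 e he
    -- extract equality of the `b` vertices
    have hb : ∀ l, l < t1 → b1 l = b2 l := by
      intro l hl
      have hmem1 : (a1 l, b1 l) ∈ augment p1.1 t1 a1 b1 :=
        wAdd_subset_augment hwalk1 (mem_wAdd_iff.2 ⟨l, hl, rfl⟩)
      have hmem2 : (a2 l, b2 l) ∈ augment p2.1 t2 a2 b2 :=
        wAdd_subset_augment hwalk2 (mem_wAdd_iff.2 ⟨l, by omega, rfl⟩)
      have e1 : pfn (augment p1.1 t1 a1 b1) (a1 l) = b1 l := pfn_eq hMaug hmem1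
      have hMaug2 : IsMatching (augment p2.1 t2 a2 b2) := by
        rw [← hA]; exact hMaug
      have e2 : pfn (augment p1.1 t1 a1 b1) (a2 l) = b2 l := by
        rw [hA]
        exact pfn_eq hMaug2 hmem2
      rw [← e1, ← e2, ha l hl]
    -- the walks have the same edge sets
    have hadd : wAdd t1 a1 b1 = wAdd t2 a2 b2 := by
      rw [← ht]
      apply Finset.image_congr
      intro l hl
      simp only [Finset.mem_coe, Finset.mem_range] at hl
      show (a1 l, b1 l) = (a2 l, b2 l)
      rw [ha l hl, hb l hl]
    have hdel : wDel t1 a1 b1 = wDel t2 a2 b2 := by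
      rw [← ht]
      apply Finset.image_congr
      intro l hl
      simp only [Finset.mem_coe, Finset.mem_range] at hl
      show (a1 (l+1), b1 l) = (a2 (l+1), b2 l)
      rw [ha (l+1) (by omega), hb l (by omega)]
    -- recover the matchings and endpoints
    have hM12 : p1.1 = p2.1 := by
      rw [augment_recover hwalk1, augment_recover hwalk2, ← hA, ← hadd, ← hdel]
    have hw12 : p1.2 = p2.2 := by
      rw [← hbend1, ← hbend2, ← ht]
      exact hb (t1 - 1) (by omega)
    obtain ⟨M1, w1⟩ := p1
    obtain ⟨M2, w2⟩ := p2
    simp only at hM12 hw12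
    subst hM12
    subst hw12
    rfl
  have hupper : pairs.card ≤ numMatchings E (j+1) * ((r + 1) * (n * (Δ * Δ + 1) ^ r)) := by
    have h1 := Finset.card_le_card_of_injOn enc hmaps hinj
    have h2 : target.card = (mSet E (j+1)).card * ((r+1) * (chainF (tStep E) r).card) := by
      rw [htarget, Finset.card_product, Finset.card_product, Finset.card_range]
    have h3 := chainF_card (tStep_card hdeg) r
    calc pairs.card ≤ target.card := h1
      _ = (mSet E (j+1)).card * ((r+1) * (chainF (tStep E) r).card) := h2
      _ ≤ (mSet E (j+1)).card * ((r+1) * (n * (Δ * Δ + 1) ^ r)) := by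
          exact Nat.mul_le_mul_left _ (Nat.mul_le_mul_left _ h3)
      _ = numMatchings E (j+1) * ((r + 1) * (n * (Δ * Δ + 1) ^ r)) := by rw [mSet_card]
  calc (n - j) * numMatchings E j = (n - j) * (mSet E j).card := by rw [mSet_card]
    _ ≤ 8 * pairs.card := hlow
    _ ≤ 8 * (numMatchings E (j+1) * ((r + 1) * (n * (Δ * Δ + 1) ^ r))) :=
        Nat.mul_le_mul_left _ hupper
    _ = 8 * ((r + 1) * (n * (Δ * Δ + 1) ^ r)) * numMatchings E (j+1) := by ring

end RPM
namespace RPM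

open Finset

variable {n : ℕ}

set_option maxHeartbeats 1600000 in
lemma per_step_real {E : Finset (Fin n × Fin n)} {α : ℝ} {Δ j : ℕ}
    (hn : 2 ≤ n) (hα : 0 < α) (hexp : IsExpander E α) (hdeg : maxDegLe E Δ)
    (hj : j < n) :
    (numMatchings E j : ℝ) ≤
      (2 * Real.exp 1 * n / ((n : ℝ) - j)) ^ (34 * Real.log Δ / Real.log (1 + α)) *
        (numMatchings E (j+1) : ℝ) := by
  obtain ⟨r, hr1, hrlog, hreach⟩ := main_reach hn hα hexp hj
  have hΔ2 : 2 ≤ Δ := two_le_delta hn hα hexp hdeg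
  have hcount := step_count hdeg hj hr1 (fun M hM hMc => hreach M hM hMc)
  -- notation
  set u : ℝ := (n : ℝ) - j with hu
  have hu1 : (1 : ℝ) ≤ u := by
    have : (j : ℝ) + 1 ≤ n := by exact_mod_cast hj
    simp only [hu]; linarith
  have hupos : (0:ℝ) < u := by linarith
  have hun : u ≤ n := by
    have : (0:ℝ) ≤ j := Nat.cast_nonneg j
    simp only [hu]; linarith
  have hnpos : (0:ℝ) < n := by
    have : (2:ℝ) ≤ n := by exact_mod_cast hn
    linarith
  have he2 : (2:ℝ) ≤ Real.exp 1 := by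
    have := Real.add_one_le_exp 1; linarith
  set B : ℝ := 2 * Real.exp 1 * n / u with hB
  have hB2e : 2 * Real.exp 1 ≤ B := by
    rw [hB, le_div_iff₀ hupos]
    nlinarith
  have hBpos : (0:ℝ) < B := by positivity
  have hB1 : (1:ℝ) ≤ B := by
    have h4 : (4:ℝ) ≤ 2 * Real.exp 1 := by linarith
    linarith
  set Q : ℝ := Real.log B with hQ
  have hQ2e : Real.log 2 + 1 ≤ Q := by
    rw [hQ]
    calc Real.log 2 + 1 = Real.log (2 * Real.exp 1) := by
          rw [Real.log_mul (by norm_num) (Real.exp_ne_zero 1), Real.log_exp]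
      _ ≤ Real.log B := Real.log_le_log (by positivity) hB2e
  have hlog2 : (0.69 : ℝ) ≤ Real.log 2 := by
    have := Real.log_two_gt_d9; linarith
  have hQpos : (0:ℝ) < Q := by linarith
  set y : ℝ := Real.log (1 + α) with hy
  have hypos : (0:ℝ) < y := Real.log_pos (by linarith)
  set d : ℝ := Real.log Δ with hd
  have hdlog2 : Real.log 2 ≤ d := by
    rw [hd]
    apply Real.log_le_log (by norm_num)
    exact_mod_cast hΔ2
  have hdpos : (0:ℝ) < d := by linarith
  have hy4 : y ≤ Real.log 4 := by
    rw [hy]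
    exact Real.log_le_log (by linarith) (one_add_alpha_le_four hn hα hexp)
  have hlog4 : Real.log 4 = 2 * Real.log 2 := by
    rw [show (4:ℝ) = 2^2 by norm_num, Real.log_pow]
    push_cast; ring
  have hy2d : y ≤ 2 * d := by rw [hlog4] at hy4; linarith
  set β : ℝ := d / y with hβ
  have hβhalf : (1:ℝ)/2 ≤ β := by
    rw [hβ, le_div_iff₀ hypos]
    linarith
  have hβpos : (0:ℝ) < β := by linarith
  -- bound r·d
  have hrd : (r:ℝ) * d ≤ 7 * Q * β := by
    have h1 : (r:ℝ) * y ≤ 7 * Q := hrlog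
    have h2 : (r:ℝ) * y * β ≤ 7 * Q * β := by
      apply mul_le_mul_of_nonneg_right h1 (le_of_lt hβpos)
    calc (r:ℝ) * d = (r:ℝ) * y * β := by
          rw [hβ]; field_simp
      _ ≤ 7 * Q * β := h2
  have hdQβ : d ≤ 2 * Q * β := by
    have : d = y * β := by
      rw [hβ]
      field_simp
    rw [this]
    have h1 : y ≤ 2 * Q := by
      rw [hlog4] at hy4
      linarith
    nlinarith
  -- the count factor is at most exp (30 Q β)
  have hΔcast : (Δ:ℝ) = Real.exp d := by
    rw [hd, Real.exp_log]
    have : (0:ℕ) < Δ := by omega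
    exact_mod_cast this
  have hp1 : (((Δ * Δ + 1 : ℕ) : ℝ)) ^ r ≤ Real.exp (3 * ((r:ℝ) * d)) := by
    have h1 : ((Δ * Δ + 1 : ℕ) : ℝ) ≤ (Δ:ℝ)^3 := by
      have h2 : (Δ * Δ + 1 : ℕ) ≤ Δ^3 := by nlinarith
      exact_mod_cast h2
    calc (((Δ * Δ + 1 : ℕ) : ℝ)) ^ r ≤ ((Δ:ℝ)^3) ^ r := by
          apply pow_le_pow_left₀ (by positivity) h1
      _ = Real.exp (3 * ((r:ℝ) * d)) := by
          rw [hΔcast, ← Real.exp_nat_mul, ← Real.exp_nat_mul]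
          congr 1
          push_cast
          ring
  have hp2 : ((r:ℝ) + 1) ≤ Real.exp ((r:ℝ) * d + d) := by
    have h1 : (r:ℕ) + 1 ≤ 2 ^ (r+1) := (Nat.lt_two_pow_self).le
    have h2 : ((r:ℝ) + 1) ≤ (2:ℝ) ^ (r+1 : ℕ) := by exact_mod_cast h1
    calc ((r:ℝ) + 1) ≤ (2:ℝ) ^ (r+1 : ℕ) := h2
      _ = Real.exp ((r+1 : ℕ) * Real.log 2) := by
          rw [← Real.log_rpow (by norm_num : (0:ℝ) < 2), Real.exp_log (by positivity),
            Real.rpow_natCast]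
      _ ≤ Real.exp ((r:ℝ) * d + d) := by
          apply Real.exp_le_exp.2
          have : ((r+1 : ℕ) : ℝ) * Real.log 2 ≤ ((r+1 : ℕ) : ℝ) * d :=
            mul_le_mul_of_nonneg_left hdlog2 (by positivity)
          push_cast at this ⊢
          nlinarith [Nat.cast_nonneg (α := ℝ) r]
  -- powers of B
  have hBrpow : ∀ x : ℝ, B ^ x = Real.exp (x * Q) := by
    intro x
    rw [Real.rpow_def_of_pos hBpos, hQ, mul_comm]
  have hKbound : ((8 * ((r + 1) * (n * (Δ * Δ + 1) ^ r)) : ℕ) : ℝ) ≤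
      u * B ^ (34 * β) := by
    have hKcast : ((8 * ((r + 1) * (n * (Δ * Δ + 1) ^ r)) : ℕ) : ℝ)
        = 8 * (((r:ℝ) + 1) * ((n:ℝ) * (((Δ * Δ + 1 : ℕ) : ℝ)) ^ r)) := by
      push_cast; ring
    rw [hKcast]
    have hstep1 : 8 * (((r:ℝ) + 1) * ((n:ℝ) * (((Δ * Δ + 1 : ℕ) : ℝ)) ^ r)) ≤
        8 * (n:ℝ) * Real.exp (4 * ((r:ℝ) * d) + d) := by
      have e1 : (0:ℝ) < Real.exp ((r:ℝ) * d + d) := Real.exp_pos _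
      have e2 : (0:ℝ) ≤ (((Δ * Δ + 1 : ℕ) : ℝ)) ^ r := by positivity
      have e3 := mul_le_mul hp2 hp1 e2 (le_of_lt e1)
      calc 8 * (((r:ℝ) + 1) * ((n:ℝ) * (((Δ * Δ + 1 : ℕ) : ℝ)) ^ r))
          = 8 * (n:ℝ) * (((r:ℝ) + 1) * (((Δ * Δ + 1 : ℕ) : ℝ)) ^ r) := by ring
        _ ≤ 8 * (n:ℝ) * (Real.exp ((r:ℝ) * d + d) * Real.exp (3 * ((r:ℝ) * d))) := by
            apply mul_le_mul_of_nonneg_left e3 (by positivity)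
        _ = 8 * (n:ℝ) * Real.exp (4 * ((r:ℝ) * d) + d) := by
            rw [← Real.exp_add]
            congr 1
            ring
    have hstep2 : Real.exp (4 * ((r:ℝ) * d) + d) ≤ Real.exp (30 * Q * β) := by
      apply Real.exp_le_exp.2
      nlinarith
    have hstep3 : 8 * (n:ℝ) ≤ u * B ^ (4 * β) := by
      have h1 : u * B = 2 * Real.exp 1 * n := by
        rw [hB]; field_simp
      have h2 : B ≤ B ^ (2 * β) := by
        calc B = B ^ (1:ℝ) := (Real.rpow_one B).symm
          _ ≤ B ^ (2 * β) := Real.rpow_le_rpow_of_exponent_le hB1 (by linarith)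
      have h3 : (2:ℝ) ≤ B ^ (2 * β) := by
        calc (2:ℝ) ≤ 2 * Real.exp 1 := by nlinarith
          _ ≤ B := hB2e
          _ ≤ B ^ (2 * β) := h2
      have h4 : 8 * (n:ℝ) ≤ (u * B) * 2 := by
        rw [h1]; nlinarith
      calc 8 * (n:ℝ) ≤ (u * B) * 2 := h4
        _ ≤ (u * B) * B ^ (2*β) := by
            apply mul_le_mul_of_nonneg_left h3 (by positivity)
        _ = u * (B * B ^ (2*β)) := by ring
        _ = u * B ^ (1 + 2*β) := by
            rw [← Real.rpow_one_add' (by positivity) (by nlinarith)]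
        _ ≤ u * B ^ (4 * β) := by
            apply mul_le_mul_of_nonneg_left _ (by positivity)
            exact Real.rpow_le_rpow_of_exponent_le hB1 (by linarith)
    calc 8 * (((r:ℝ) + 1) * ((n:ℝ) * (((Δ * Δ + 1 : ℕ) : ℝ)) ^ r))
        ≤ 8 * (n:ℝ) * Real.exp (4 * ((r:ℝ) * d) + d) := hstep1
      _ ≤ (u * B ^ (4 * β)) * Real.exp (30 * Q * β) := by
          apply mul_le_mul hstep3 hstep2 (by positivity) (by positivity)
      _ = u * (B ^ (4 * β) * B ^ (30 * β)) := by
          have hBr30 : Real.exp (30 * Q * β) = B ^ (30 * β) := by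
            rw [hBrpow (30 * β)]
            congr 1
            ring
          rw [hBr30]
          ring
      _ = u * B ^ (34 * β) := by
          congr 1
          rw [← Real.rpow_add hBpos]
          congr 1
          ring
  -- put it together
  have hcastN : (((n - j : ℕ)) : ℝ) = u := by
    push_cast [Nat.cast_sub hj.le]; rfl
  have hmain : u * (numMatchings E j : ℝ) ≤
      (u * B ^ (34 * β)) * (numMatchings E (j+1) : ℝ) := by
    have h1 : (((n - j) * numMatchings E j : ℕ) : ℝ) ≤
        (((8 * ((r + 1) * (n * (Δ * Δ + 1) ^ r))) * numMatchings E (j+1) : ℕ) : ℝ) := by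
      exact_mod_cast hcount
    push_cast at h1
    rw [hcastN] at h1
    calc u * (numMatchings E j : ℝ) ≤
        ((8 * ((r + 1) * (n * (Δ * Δ + 1) ^ r)) : ℕ) : ℝ) * (numMatchings E (j+1) : ℝ) := by
          push_cast
          linarith
      _ ≤ (u * B ^ (34 * β)) * (numMatchings E (j+1) : ℝ) := by
          apply mul_le_mul_of_nonneg_right hKbound (Nat.cast_nonneg _)
  have hfinal : (numMatchings E j : ℝ) ≤ B ^ (34 * β) * (numMatchings E (j+1) : ℝ) := by
    have := (mul_le_mul_iff_right₀ hupos).1 (by linarith [hmain] :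
      u * (numMatchings E j : ℝ) ≤ u * (B ^ (34 * β) * (numMatchings E (j+1) : ℝ)))
    exact this
  have hexpb : 34 * β = 34 * d / y := by
    rw [hβ]; ring
  rw [← hexpb]
  exact hfinal

end RPM
namespace RPM

open Finset

variable {n : ℕ}

lemma pow_le_factorial_mul_exp : ∀ m : ℕ, (m : ℝ) ^ m ≤ (m.factorial : ℝ) * Real.exp 1 ^ m := by
  intro m
  induction m with
  | zero => simp
  | succ m ih =>
    have hkey : ((m : ℝ) + 1) ^ m ≤ (m : ℝ) ^ m * Real.exp 1 := by
      rcases Nat.eq_zero_or_pos m with rfl | hm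
      · have := Real.add_one_le_exp 1
        simp only [Nat.cast_zero, pow_zero, zero_add, one_pow]
        nlinarith [Real.exp_pos 1]
      · have hmpos : (0:ℝ) < m := by exact_mod_cast hm
        have h1 : (m : ℝ) + 1 = m * (1 + 1/m) := by field_simp
        rw [h1, mul_pow]
        apply mul_le_mul_of_nonneg_left _ (by positivity)
        have h2 : (1 + 1/(m:ℝ)) ≤ Real.exp (1/m) := by
          have := Real.add_one_le_exp (1/(m:ℝ))
          linarith
        calc (1 + 1/(m:ℝ)) ^ m ≤ Real.exp (1/(m:ℝ)) ^ m :=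
              pow_le_pow_left₀ (by positivity) h2 m
          _ = Real.exp ((m:ℝ) * (1/(m:ℝ))) := by rw [← Real.exp_nat_mul]
          _ = Real.exp 1 := by
              congr 1
              field_simp
    have hle : ((m:ℝ) + 1) ^ (m+1) ≤ ((m+1 : ℕ).factorial : ℝ) * Real.exp 1 ^ (m+1) := by
      have hexp : (0:ℝ) < Real.exp 1 := Real.exp_pos 1
      calc ((m:ℝ) + 1) ^ (m+1) = ((m:ℝ)+1) * ((m:ℝ)+1) ^ m := by rw [pow_succ]; ring
        _ ≤ ((m:ℝ)+1) * ((m : ℝ) ^ m * Real.exp 1) :=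
            mul_le_mul_of_nonneg_left hkey (by positivity)
        _ ≤ ((m:ℝ)+1) * (((m.factorial : ℝ) * Real.exp 1 ^ m) * Real.exp 1) := by
            apply mul_le_mul_of_nonneg_left _ (by positivity)
            exact mul_le_mul_of_nonneg_right ih (le_of_lt hexp)
        _ = (((m:ℝ)+1) * (m.factorial : ℝ)) * Real.exp 1 ^ (m+1) := by rw [pow_succ]; ring
        _ = ((m+1 : ℕ).factorial : ℝ) * Real.exp 1 ^ (m+1) := by
            rw [Nat.factorial_succ]
            push_cast
            ring
    calc ((m+1 : ℕ) : ℝ) ^ (m+1) = ((m:ℝ)+1) ^ (m+1) := by push_cast; ring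
      _ ≤ _ := hle

lemma prod_sub_eq_factorial :
    ∀ m k : ℕ, k + m = n → ∏ j ∈ Finset.Ico k n, ((n : ℝ) - j) = (m.factorial : ℝ) := by
  intro m
  induction m with
  | zero =>
    intro k hk
    have : k = n := by omega
    subst this
    simp
  | succ m ih =>
    intro k hk
    have hkn : k < n := by omega
    rw [Finset.prod_eq_prod_Ico_succ_bot hkn, ih (k+1) (by omega)]
    have h1 : (n : ℝ) - k = (m+1 : ℕ) := by
      have : (k + (m+1) : ℕ) = n := hk
      have h2 : (n:ℝ) = (k:ℝ) + (m+1 : ℕ) := by exact_mod_cast congrArg (Nat.cast : ℕ → ℝ) this.symm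
      push_cast at h2 ⊢
      linarith
    rw [h1, Nat.factorial_succ]
    push_cast
    ring

lemma numMatchings_zero (E : Finset (Fin n × Fin n)) : numMatchings E 0 = 1 := by
  have : E.powerset.filter (fun M => IsMatching M ∧ M.card = 0) = {∅} := by
    ext M
    simp only [Finset.mem_filter, Finset.mem_powerset, Finset.mem_singleton,
      Finset.card_eq_zero]
    constructor
    · rintro ⟨-, -, h⟩; exact h
    · rintro rfl
      refine ⟨Finset.empty_subset E, ?_, rfl⟩
      intro e he
      simp at he
  rw [numMatchings, this, Finset.card_singleton]

end RPM
namespace RPM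

open Finset

variable {n : ℕ}

lemma telescope {E : Finset (Fin n × Fin n)} {α : ℝ} {Δ : ℕ}
    (hn : 2 ≤ n) (hα : 0 < α) (hexp : IsExpander E α) (hdeg : maxDegLe E Δ) :
    ∀ m k : ℕ, k + m = n →
      (numMatchings E k : ℝ) ≤
        (∏ j ∈ Finset.Ico k n,
          (2 * Real.exp 1 * n / ((n:ℝ) - j)) ^ (34 * Real.log Δ / Real.log (1 + α))) *
          (numMatchings E n : ℝ) := by
  intro m
  induction m with
  | zero =>
    intro k hk
    have : k = n := by omega
    subst this
    simp
  | succ m ih =>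
    intro k hk
    have hkn : k < n := by omega
    have hstep := per_step_real hn hα hexp hdeg hkn
    have hih := ih (k+1) (by omega)
    rw [Finset.prod_eq_prod_Ico_succ_bot hkn]
    have hfk : (0:ℝ) ≤ (2 * Real.exp 1 * n / ((n:ℝ) - k)) ^
        (34 * Real.log Δ / Real.log (1 + α)) := by
      apply Real.rpow_nonneg
      have h1 : (k : ℝ) + 1 ≤ n := by exact_mod_cast hkn
      have : (0:ℝ) ≤ (n:ℝ) - k := by linarith
      positivity
    calc (numMatchings E k : ℝ)
        ≤ (2 * Real.exp 1 * n / ((n:ℝ) - k)) ^ (34 * Real.log Δ / Real.log (1 + α)) *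
          (numMatchings E (k+1) : ℝ) := hstep
      _ ≤ (2 * Real.exp 1 * n / ((n:ℝ) - k)) ^ (34 * Real.log Δ / Real.log (1 + α)) *
          ((∏ j ∈ Finset.Ico (k+1) n,
            (2 * Real.exp 1 * n / ((n:ℝ) - j)) ^ (34 * Real.log Δ / Real.log (1 + α))) *
            (numMatchings E n : ℝ)) := mul_le_mul_of_nonneg_left hih hfk
      _ = _ := by ring

set_option maxHeartbeats 1600000 in
lemma final_ge2 {E : Finset (Fin n × Fin n)} {α : ℝ} {Δ k : ℕ}
    (hn : 2 ≤ n) (hα : 0 < α) (hexp : IsExpander E α) (hdeg : maxDegLe E Δ)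
    (hMn : 1 ≤ numMatchings E n) (hk : k < n) :
    (numMatchings E k : ℝ) / (numMatchings E n : ℝ) ≤
      (2 * Real.exp 1 * n / ((n : ℝ) - k)) ^
        (100 * ((n : ℝ) - k) * Real.log Δ / Real.log (1 + α)) := by
  have hΔ2 : 2 ≤ Δ := two_le_delta hn hα hexp hdeg
  have hy : (0:ℝ) < Real.log (1 + α) := Real.log_pos (by linarith)
  have hd : (0:ℝ) < Real.log Δ := Real.log_pos (by exact_mod_cast hΔ2)
  set m : ℕ := n - k with hm
  have hkm : k + m = n := by omega
  have hm1 : 1 ≤ m := by omega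
  have hmcast : ((m:ℕ):ℝ) = (n:ℝ) - k := by
    push_cast [hm, Nat.cast_sub hk.le]
    rfl
  have hmpos : (0:ℝ) < ((m:ℕ):ℝ) := by
    exact_mod_cast hm1
  have hnpos : (0:ℝ) < n := by
    have : (2:ℝ) ≤ n := by exact_mod_cast hn
    linarith
  have he2 : (2:ℝ) ≤ Real.exp 1 := by
    have := Real.add_one_le_exp 1; linarith
  have hmn : ((m:ℕ):ℝ) ≤ n := by
    rw [hmcast]
    have : (0:ℝ) ≤ k := Nat.cast_nonneg k
    linarith
  set c : ℝ := 34 * Real.log Δ / Real.log (1 + α) with hc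
  have hcpos : (0:ℝ) < c := by
    rw [hc]; positivity
  set base : ℝ := 2 * Real.exp 1 * n / ((n : ℝ) - k) with hbase
  have hbasepos : (0:ℝ) < base := by
    rw [hbase, ← hmcast]
    positivity
  have hbase1 : (1:ℝ) ≤ base := by
    rw [hbase, le_div_iff₀ (by rw [← hmcast]; exact hmpos)]
    rw [← hmcast]
    nlinarith
  -- evaluate the product of the bases
  have hPpos : ∀ j ∈ Finset.Ico k n, (0:ℝ) < 2 * Real.exp 1 * n / ((n:ℝ) - j) := by
    intro j hj
    rw [Finset.mem_Ico] at hj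
    have h1 : (j:ℝ) + 1 ≤ n := by exact_mod_cast hj.2
    have : (0:ℝ) < (n:ℝ) - j := by linarith
    positivity
  have hprodeq : (∏ j ∈ Finset.Ico k n, 2 * Real.exp 1 * n / ((n:ℝ) - j))
      = (2 * Real.exp 1 * n) ^ m / (m.factorial : ℝ) := by
    rw [Finset.prod_div_distrib, Finset.prod_const, prod_sub_eq_factorial m k hkm,
      Nat.card_Ico]
  -- Stirling bound
  have hstir : (∏ j ∈ Finset.Ico k n, 2 * Real.exp 1 * n / ((n:ℝ) - j)) ≤ base ^ (2*m : ℕ) := by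
    rw [hprodeq]
    have hfacpos : (0:ℝ) < (m.factorial : ℝ) := by exact_mod_cast m.factorial_pos
    have hfac := pow_le_factorial_mul_exp m
    have h1 : (2 * Real.exp 1 * n) ^ m / (m.factorial : ℝ) ≤
        (2 * Real.exp 1 * n * Real.exp 1 / ((m:ℕ):ℝ)) ^ m := by
      rw [div_le_iff₀ hfacpos]
      have h2 : (2 * Real.exp 1 * n * Real.exp 1 / ((m:ℕ):ℝ)) ^ m
          = (2 * Real.exp 1 * n) ^ m * (Real.exp 1 ^ m / ((m:ℕ):ℝ) ^ m) := by
        rw [div_pow, mul_pow, mul_pow]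
        ring
      rw [h2]
      have h3 : (1:ℝ) ≤ Real.exp 1 ^ m / ((m:ℕ):ℝ) ^ m * (m.factorial : ℝ) := by
        rw [div_mul_eq_mul_div, le_div_iff₀ (by positivity)]
        calc (1:ℝ) * ((m:ℕ):ℝ) ^ m = ((m:ℕ):ℝ) ^ m := by ring
          _ ≤ (m.factorial : ℝ) * Real.exp 1 ^ m := hfac
          _ = Real.exp 1 ^ m * (m.factorial : ℝ) := by ring
      calc (2 * Real.exp 1 * n) ^ m = (2 * Real.exp 1 * n) ^ m * 1 := by ring
        _ ≤ (2 * Real.exp 1 * n) ^ m * (Real.exp 1 ^ m / ((m:ℕ):ℝ) ^ m * (m.factorial : ℝ)) := by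
            apply mul_le_mul_of_nonneg_left h3 (by positivity)
        _ = (2 * Real.exp 1 * n) ^ m * (Real.exp 1 ^ m / ((m:ℕ):ℝ) ^ m) * (m.factorial : ℝ) := by
            ring
    have h4 : (2 * Real.exp 1 * n * Real.exp 1 / ((m:ℕ):ℝ)) ^ m ≤ base ^ (2*m : ℕ) := by
      have h5 : 2 * Real.exp 1 * n * Real.exp 1 / ((m:ℕ):ℝ) ≤ base ^ 2 := by
        rw [hbase, ← hmcast, div_pow, div_le_div_iff₀ hmpos (by positivity)]
        have hmm : ((m:ℕ):ℝ) * ((m:ℕ):ℝ) ≤ (n:ℝ) * ((m:ℕ):ℝ) :=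
          mul_le_mul_of_nonneg_right hmn hmpos.le
        have hkey : 2*Real.exp 1*Real.exp 1*(n:ℝ)*(((m:ℕ):ℝ)*((m:ℕ):ℝ)) ≤
            2*Real.exp 1*Real.exp 1*(n:ℝ)*((n:ℝ)*((m:ℕ):ℝ)) := by
          apply mul_le_mul_of_nonneg_left hmm (by positivity)
        have hpos9 : (0:ℝ) ≤ Real.exp 1 * Real.exp 1 * (n:ℝ) * (n:ℝ) * ((m:ℕ):ℝ) := by
          positivity
        nlinarith [hkey, hpos9]
      calc (2 * Real.exp 1 * n * Real.exp 1 / ((m:ℕ):ℝ)) ^ m ≤ (base ^ 2) ^ m := by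
            apply pow_le_pow_left₀ (by positivity) h5
        _ = base ^ (2*m : ℕ) := by rw [← pow_mul]
    exact h1.trans h4
  -- combine with the telescoped bound
  have htel := telescope hn hα hexp hdeg m k hkm
  have hprodpow : (∏ j ∈ Finset.Ico k n,
      (2 * Real.exp 1 * n / ((n:ℝ) - j)) ^ c)
      = (∏ j ∈ Finset.Ico k n, 2 * Real.exp 1 * n / ((n:ℝ) - j)) ^ c :=
    Real.finset_prod_rpow _ _ (fun j hj => (hPpos j hj).le) c
  have hfinalP : (∏ j ∈ Finset.Ico k n,
      (2 * Real.exp 1 * n / ((n:ℝ) - j)) ^ c) ≤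
      base ^ (100 * ((n : ℝ) - k) * Real.log Δ / Real.log (1 + α)) := by
    rw [hprodpow]
    calc (∏ j ∈ Finset.Ico k n, 2 * Real.exp 1 * n / ((n:ℝ) - j)) ^ c
        ≤ (base ^ (2*m : ℕ)) ^ c := by
          apply Real.rpow_le_rpow (Finset.prod_nonneg (fun j hj => (hPpos j hj).le)) hstir
            (le_of_lt hcpos)
      _ = base ^ (((2*m : ℕ):ℝ) * c) := by
          rw [Real.rpow_natCast_mul (le_of_lt hbasepos)]
      _ ≤ base ^ (100 * ((n : ℝ) - k) * Real.log Δ / Real.log (1 + α)) := by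
          apply Real.rpow_le_rpow_of_exponent_le hbase1
          rw [hc]
          push_cast
          rw [← hmcast]
          have : ((m:ℕ):ℝ) * (Real.log Δ / Real.log (1+α)) ≥ 0 := by positivity
          have h68 : (2 * ((m:ℕ):ℝ)) * (34 * Real.log Δ / Real.log (1 + α))
              = 68 * (((m:ℕ):ℝ) * Real.log Δ / Real.log (1+α)) := by ring
          have h100 : 100 * ((m:ℕ):ℝ) * Real.log Δ / Real.log (1 + α)
              = 100 * (((m:ℕ):ℝ) * Real.log Δ / Real.log (1+α)) := by ring
          rw [h68, h100]
          have hpos2 : (0:ℝ) ≤ ((m:ℕ):ℝ) * Real.log Δ / Real.log (1+α) := by positivity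
          linarith
  have hMnpos : (0:ℝ) < (numMatchings E n : ℝ) := by
    exact_mod_cast Nat.lt_of_lt_of_le Nat.zero_lt_one hMn
  rw [div_le_iff₀ hMnpos]
  calc (numMatchings E k : ℝ) ≤ _ := htel
    _ ≤ base ^ (100 * ((n : ℝ) - k) * Real.log Δ / Real.log (1 + α)) *
        (numMatchings E n : ℝ) := by
      apply mul_le_mul_of_nonneg_right _ (le_of_lt hMnpos)
      exact hfinalP

end RPM
/-- For a bipartite `α`-expander of max degree `Δ` with a perfect matching,
`M(k)/M(n) ≤ (2en/(n-k))^{C (n-k) log Δ / log(1+α)}` for a universal constant `C`. -/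
theorem ratio_to_perfect_matchings :
    ∃ C : ℝ, 0 < C ∧
      ∀ (n k Δ : ℕ) (E : Finset (Fin n × Fin n)) (α : ℝ),
        0 < α → IsExpander E α → maxDegLe E Δ → 1 ≤ numMatchings E n → k < n →
        (numMatchings E k : ℝ) / (numMatchings E n : ℝ) ≤
          (2 * Real.exp 1 * n / ((n : ℝ) - k)) ^
            (C * ((n : ℝ) - k) * Real.log Δ / Real.log (1 + α)) := by
  refine ⟨100, by norm_num, ?_⟩
  intro n k Δ E α hα hexp hdeg hMn hk
  rcases le_or_gt 2 n with hn | hn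
  · exact RPM.final_ge2 hn hα hexp hdeg hMn hk
  · -- n = 1, k = 0
    have hn1 : n = 1 := by omega
    have hk0 : k = 0 := by omega
    subst hn1
    subst hk0
    -- an edge exists, so Δ ≥ 1
    have hEne : ∃ e, e ∈ E := by
      have hpos : 0 < (E.powerset.filter (fun M => IsMatching M ∧ M.card = 1)).card := hMn
      obtain ⟨M, hM⟩ := Finset.card_pos.1 hpos
      simp only [Finset.mem_filter, Finset.mem_powerset] at hM
      have : 0 < M.card := by omega
      obtain ⟨e, he⟩ := Finset.card_pos.1 this
      exact ⟨e, hM.1 he⟩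
    have hΔ1 : 1 ≤ Δ := by
      obtain ⟨e, he⟩ := hEne
      have h1 : e ∈ E.filter (fun f => f.1 = e.1) := Finset.mem_filter.2 ⟨he, rfl⟩
      have h2 : 0 < (E.filter (fun f => f.1 = e.1)).card := Finset.card_pos.2 ⟨e, h1⟩
      exact Nat.lt_of_lt_of_le h2 (hdeg.1 e.1)
    -- LHS ≤ 1
    have hM0 : numMatchings E 0 = 1 := RPM.numMatchings_zero E
    have hMnpos : (0:ℝ) < (numMatchings E 1 : ℝ) := by
      exact_mod_cast Nat.lt_of_lt_of_le Nat.zero_lt_one hMn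
    have hLHS : (numMatchings E 0 : ℝ) / (numMatchings E 1 : ℝ) ≤ 1 := by
      rw [hM0, div_le_one hMnpos]
      exact_mod_cast hMn
    -- RHS ≥ 1
    have he2 : (2:ℝ) ≤ Real.exp 1 := by
      have := Real.add_one_le_exp 1; linarith
    have hbase : (1:ℝ) ≤ 2 * Real.exp 1 * (1:ℕ) / (((1:ℕ):ℝ) - (0:ℕ)) := by
      push_cast
      norm_num
      linarith
    have hexpo : (0:ℝ) ≤ 100 * (((1:ℕ):ℝ) - (0:ℕ)) * Real.log Δ / Real.log (1 + α) := by
      have h1 : (0:ℝ) ≤ Real.log Δ := Real.log_nonneg (by exact_mod_cast hΔ1)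
      have h2 : (0:ℝ) < Real.log (1 + α) := Real.log_pos (by linarith)
      push_cast
      positivity
    have hRHS : (1:ℝ) ≤ (2 * Real.exp 1 * (1:ℕ) / (((1:ℕ):ℝ) - (0:ℕ))) ^
        (100 * (((1:ℕ):ℝ) - (0:ℕ)) * Real.log Δ / Real.log (1 + α)) := by
      calc (1:ℝ) = (2 * Real.exp 1 * (1:ℕ) / (((1:ℕ):ℝ) - (0:ℕ))) ^ (0:ℝ) :=
            (Real.rpow_zero _).symm
        _ ≤ _ := Real.rpow_le_rpow_of_exponent_le hbase hexpo
    exact hLHS.trans hRHS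
end

section
/- Let c > 8 be a constant. For all sufficiently large n and all integers 1 ≤ r ≤ n/2: exp(2 n^{−1/3} r log n) · exp(c (n−r)^{2/3} log^3 n) ≤ (1 − n^{−1/3}) exp(c n^{2/3} log^3 n). -/
set_option maxHeartbeats 1600000 in
/-- For `c > 8`, all large `n` and `1 ≤ r ≤ n/2`:
`exp(2 n^{−1/3} r log n) · exp(c (n−r)^{2/3} log³ n) ≤ (1 − n^{−1/3}) exp(c n^{2/3} log³ n)`. -/
theorem recursion_step_bound (c : ℝ) (hc : 8 < c) :
    ∃ N : ℕ, ∀ n : ℕ, N ≤ n → ∀ r : ℕ, 1 ≤ r → (r : ℝ) ≤ (n : ℝ) / 2 →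
      Real.exp (2 * (n : ℝ) ^ (-(1 : ℝ) / 3) * r * Real.log n) *
          Real.exp (c * ((n : ℝ) - r) ^ ((2 : ℝ) / 3) * Real.log n ^ 3) ≤
        (1 - (n : ℝ) ^ (-(1 : ℝ) / 3)) *
          Real.exp (c * (n : ℝ) ^ ((2 : ℝ) / 3) * Real.log n ^ 3) := by
  use 8
  intro n hn r hr hrn
  have hn8 : (8 : ℝ) ≤ (n : ℝ) := by exact_mod_cast hn
  have hn0 : (0 : ℝ) < (n : ℝ) := by linarith
  have hr1 : (1 : ℝ) ≤ (r : ℝ) := by exact_mod_cast hr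
  set x : ℝ := (n : ℝ) ^ (-(1 : ℝ) / 3) with hxdef
  clear_value x
  have hx0 : 0 < x := by rw [hxdef]; exact Real.rpow_pos_of_pos hn0 _
  have hx3 : x ^ 3 = ((n : ℝ))⁻¹ := by
    rw [hxdef, ← Real.rpow_natCast ((n:ℝ) ^ (-(1:ℝ)/3)) 3, ← Real.rpow_mul hn0.le]
    norm_num [Real.rpow_neg_one]
  have hxhalf : x ≤ 1 / 2 := by
    have hcube : x ^ 3 ≤ (1/2 : ℝ) ^ 3 := by
      rw [hx3]
      have : (n : ℝ)⁻¹ ≤ (8 : ℝ)⁻¹ := by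
        apply inv_anti₀ <;> linarith
      linarith [this]
    nlinarith [hx0, sq_nonneg (x - 1/2), sq_nonneg (x + 1/2)]
  have hl : 1 ≤ Real.log n := by
    rw [Real.le_log_iff_exp_le hn0]
    have := Real.exp_one_lt_d9
    linarith
  -- n * x = n^(2/3)
  have hnx : (n : ℝ) * x = (n : ℝ) ^ ((2 : ℝ) / 3) := by
    have h := Real.rpow_add hn0 1 (-(1:ℝ)/3)
    rw [Real.rpow_one] at h
    rw [hxdef, ← h]
    norm_num
  have hnr : (0 : ℝ) ≤ (n : ℝ) - r := by linarith
  set a : ℝ := ((n : ℝ) - r) ^ ((2 : ℝ) / 3) with hadef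
  clear_value a
  have ha0 : 0 ≤ a := by rw [hadef]; exact Real.rpow_nonneg hnr _
  have ha3 : a ^ 3 = ((n : ℝ) - r) ^ 2 := by
    rw [hadef, ← Real.rpow_natCast (((n:ℝ) - r) ^ ((2:ℝ)/3)) 3, ← Real.rpow_mul hnr,
      ← Real.rpow_natCast ((n:ℝ) - r) 2]
    norm_num
  set b : ℝ := ((n : ℝ) - r / 2) * x with hbdef
  clear_value b
  have hb0 : 0 ≤ b := by
    rw [hbdef]
    apply mul_nonneg _ hx0.le
    linarith
  have hb3 : b ^ 3 = ((n : ℝ) - r / 2) ^ 3 * ((n : ℝ))⁻¹ := by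
    rw [hbdef, mul_pow, hx3]
  have hkey : ((n : ℝ) - r) ^ 2 * (n : ℝ) ≤ ((n : ℝ) - r / 2) ^ 3 := by
    have haux1 : 0 ≤ 4 * (n:ℝ)^2 - 2 * n * r - (r:ℝ)^2 := by nlinarith [hrn, hr1, hn8]
    have haux : 0 ≤ (r:ℝ) * (4 * (n:ℝ)^2 - 2 * n * r - (r:ℝ)^2) :=
      mul_nonneg (by linarith) haux1
    nlinarith [haux]
  have hab3 : a ^ 3 ≤ b ^ 3 := by
    rw [ha3, hb3, ← div_eq_mul_inv, le_div_iff₀ hn0]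
    exact hkey
  have hab : a ≤ b := (pow_le_pow_iff_left₀ ha0 hb0 (by norm_num : (3:ℕ) ≠ 0)).1 hab3
  -- key bound on concave term
  have h1 : a ≤ (n : ℝ) ^ ((2 : ℝ) / 3) - (r / 2) * x := by
    rw [← hnx]
    calc a ≤ b := hab
      _ = (n : ℝ) * x - (r / 2) * x := by rw [hbdef]; ring
  set l : ℝ := Real.log n with hldef
  clear_value l
  have hl3 : l ≤ l ^ 3 := by
    nlinarith [mul_nonneg (mul_nonneg (by linarith : (0:ℝ) ≤ l) (by linarith : (0:ℝ) ≤ l - 1)) (by linarith : (0:ℝ) ≤ l + 1)]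
  -- exponent comparison
  have hexp : 2 * x * r * l + c * a * l ^ 3 ≤ c * (n : ℝ) ^ ((2 : ℝ) / 3) * l ^ 3 + (-(2 * x)) := by
    have h2 : c * a * l ^ 3 ≤ c * ((n : ℝ) ^ ((2 : ℝ) / 3) - (r / 2) * x) * l ^ 3 :=
      mul_le_mul_of_nonneg_right (mul_le_mul_of_nonneg_left h1 (by linarith))
        (pow_nonneg (by linarith) 3)
    have hrx : (0:ℝ) ≤ (r:ℝ) * x := mul_nonneg (by linarith) hx0.le
    have hC : 2 * x * r * l + 2 * x ≤ 4 * r * x * l := by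
      nlinarith [mul_nonneg (mul_nonneg hx0.le (by linarith : (0:ℝ) ≤ (r:ℝ) - 1)) (by linarith : (0:ℝ) ≤ l),
        mul_nonneg hx0.le (by linarith : (0:ℝ) ≤ l - 1)]
    have hA : 4 * (r:ℝ) * x * l ≤ 4 * r * x * l ^ 3 := by
      nlinarith [mul_nonneg hrx (by linarith : (0:ℝ) ≤ l^3 - l)]
    have hB : 4 * (r:ℝ) * x * l ^ 3 ≤ c * ((r : ℝ) / 2) * x * l ^ 3 := by
      nlinarith [mul_nonneg (mul_nonneg hrx (by nlinarith : (0:ℝ) ≤ l^3)) (by linarith : (0:ℝ) ≤ c - 8)]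
    have h3 : 2 * x * r * l + 2 * x ≤ c * ((r : ℝ) / 2) * x * l ^ 3 := by linarith
    nlinarith [h2, h3]
  -- exp(-2x) ≤ 1 - x
  have hE : Real.exp (-(2 * x)) ≤ 1 - x := by
    have h1' := Real.add_one_le_exp (2 * x)
    have h2' : (1 : ℝ) ≤ (1 - x) * Real.exp (2 * x) := by
      nlinarith [h1', hxhalf, hx0,
        mul_nonneg (by linarith : (0:ℝ) ≤ 1 - x) (by linarith : (0:ℝ) ≤ Real.exp (2*x) - (2*x + 1))]
    have h3' : Real.exp (-(2 * x)) * Real.exp (2 * x) ≤ (1 - x) * Real.exp (2 * x) := by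
      rw [← Real.exp_add]
      simpa using h2'
    exact le_of_mul_le_mul_right h3' (Real.exp_pos _)
  calc Real.exp (2 * x * r * l) * Real.exp (c * a * l ^ 3)
      = Real.exp (2 * x * r * l + c * a * l ^ 3) := (Real.exp_add _ _).symm
    _ ≤ Real.exp (c * (n : ℝ) ^ ((2 : ℝ) / 3) * l ^ 3 + (-(2 * x))) := Real.exp_le_exp.2 hexp
    _ = Real.exp (-(2 * x)) * Real.exp (c * (n : ℝ) ^ ((2 : ℝ) / 3) * l ^ 3) := by
        rw [← Real.exp_add]; congr 1; ring
    _ ≤ (1 - x) * Real.exp (c * (n : ℝ) ^ ((2 : ℝ) / 3) * l ^ 3) :=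
        mul_le_mul_of_nonneg_right hE (Real.exp_pos _).le
end

section
/- Suppose g: ℕ → ℝ satisfies g(r) ≤ exp(c r^{2/3} log^3 r) for all r ≤ n−1 (with c > max(8, 1 + (8/7)·1) large enough that 1 + (3/4)c < (7/8)c), and g(n) ≤ max( exp(c₀ n^{2/3} log^3 n), max_{1 ≤ r ≤ n/2} exp(2 n^{−1/3} r log n)(g(r) + g(n−r)) ) with c₀ < c. Then for sufficiently large n, g(n) ≤ exp(c n^{2/3} log^3 n). -/
private lemma cube_rpow' (x : ℝ) (hx : 0 ≤ x) : (x ^ ((1:ℝ)/3)) ^ (3:ℕ) = x := by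
  rw [← Real.rpow_natCast (x ^ ((1:ℝ)/3)) 3, ← Real.rpow_mul hx]; norm_num

private lemma mono_f' {a b : ℝ} (ha : 1 ≤ a) (hab : a ≤ b) :
    a ^ ((2:ℝ)/3) * Real.log a ^ 3 ≤ b ^ ((2:ℝ)/3) * Real.log b ^ 3 := by
  have h1 : a ^ ((2:ℝ)/3) ≤ b ^ ((2:ℝ)/3) :=
    Real.rpow_le_rpow (by linarith) hab (by norm_num)
  have h2 : Real.log a ≤ Real.log b := Real.log_le_log (by linarith) hab
  have h3 : 0 ≤ Real.log a := Real.log_nonneg ha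
  exact mul_le_mul h1 (pow_le_pow_left₀ h3 h2 3) (pow_nonneg h3 3)
    (Real.rpow_nonneg (by linarith) _)

private lemma concave_key' {x r : ℝ} (hx : 0 < x) (hr : 0 ≤ r) (hrx : r ≤ x) :
    r / (3 * x ^ ((1:ℝ)/3)) ≤ x ^ ((2:ℝ)/3) - (x - r) ^ ((2:ℝ)/3) := by
  set a := x ^ ((1:ℝ)/3) with hadef
  set b := (x - r) ^ ((1:ℝ)/3) with hbdef
  have ha3 : a ^ (3:ℕ) = x := cube_rpow' x hx.le
  have hb3 : b ^ (3:ℕ) = x - r := cube_rpow' _ (by linarith)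
  have ha2 : a ^ (2:ℕ) = x ^ ((2:ℝ)/3) := by
    rw [hadef, ← Real.rpow_natCast (x ^ ((1:ℝ)/3)) 2, ← Real.rpow_mul hx.le]; norm_num
  have hb2 : b ^ (2:ℕ) = (x - r) ^ ((2:ℝ)/3) := by
    rw [hbdef, ← Real.rpow_natCast ((x-r) ^ ((1:ℝ)/3)) 2,
      ← Real.rpow_mul (show (0:ℝ) ≤ x - r by linarith)]; norm_num
  have ha0 : 0 < a := Real.rpow_pos_of_pos hx _
  have hb0 : 0 ≤ b := Real.rpow_nonneg (by linarith) _
  have hba : b ≤ a := Real.rpow_le_rpow (by linarith) (by linarith) (by norm_num)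
  rw [← ha2, ← hb2, div_le_iff₀ (by positivity)]
  have hr' : r = a ^ (3:ℕ) - b ^ (3:ℕ) := by rw [ha3, hb3]; ring
  rw [hr']
  nlinarith [mul_nonneg (sub_nonneg.2 hba) (mul_nonneg hb0 hb0),
    mul_nonneg (mul_nonneg (sub_nonneg.2 hba) (sub_nonneg.2 hba)) ha0.le,
    mul_nonneg (mul_nonneg (sub_nonneg.2 hba) (sub_nonneg.2 hba)) hb0]

set_option maxHeartbeats 4000000 in
/-- Solution of the recursion for the running time: if `g(r) ≤ exp(c r^{2/3} log³ r)` for all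
`r ≤ n−1` and `g(n)` satisfies the recursive bound, then `g(n) ≤ exp(c n^{2/3} log³ n)`
for sufficiently large `n`. -/
theorem recursion_solution (c c₀ : ℝ) (hc : 8 < c) (hc' : 1 + 3 / 4 * c < 7 / 8 * c)
    (hc₀ : 0 < c₀) (hcc : c₀ < c) :
    ∃ N : ℕ, ∀ n : ℕ, N ≤ n → ∀ g : ℕ → ℝ,
      (∀ r ≤ n - 1, g r ≤ Real.exp (c * (r : ℝ) ^ ((2 : ℝ) / 3) * Real.log r ^ 3)) →
      (g n ≤ Real.exp (c₀ * (n : ℝ) ^ ((2 : ℝ) / 3) * Real.log n ^ 3) ∨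
        ∃ r : ℕ, 1 ≤ r ∧ (r : ℝ) ≤ (n : ℝ) / 2 ∧
          g n ≤ Real.exp (2 * (n : ℝ) ^ (-(1 : ℝ) / 3) * r * Real.log n) *
            (g r + g (n - r))) →
      g n ≤ Real.exp (c * (n : ℝ) ^ ((2 : ℝ) / 3) * Real.log n ^ 3) := by
  refine ⟨32768, ?_⟩
  intro n hn g hg hrec
  set x : ℝ := (n : ℝ) with hxdef
  have hxN : (32768:ℝ) ≤ x := by rw [hxdef]; exact_mod_cast hn
  have hx0 : (0:ℝ) < x := by linarith only [hxN]
  have hx1 : (1:ℝ) ≤ x := by linarith only [hxN]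
  have hL2 : (2:ℝ) ≤ Real.log x := by
    rw [Real.le_log_iff_exp_le hx0]
    have h1 := Real.exp_one_lt_d9
    have h2 : Real.exp 2 = Real.exp 1 * Real.exp 1 := by rw [← Real.exp_add]; norm_num
    nlinarith only [h1, h2, hxN, Real.exp_pos 1]
  set L := Real.log x with hLdef
  have hL0 : (0:ℝ) ≤ L := by linarith only [hL2]
  have hL3 : (8:ℝ) ≤ L ^ 3 := by
    calc (8:ℝ) = 2 ^ 3 := by norm_num
    _ ≤ L ^ 3 := pow_le_pow_left₀ (by norm_num) hL2 3
  have hcpos : (0:ℝ) ≤ c := by linarith only [hc]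
  rcases hrec with h | ⟨r, hr1, hr2, hgr⟩
  · refine h.trans (Real.exp_le_exp.2 ?_)
    have h1 : (0:ℝ) ≤ x ^ ((2:ℝ)/3) := Real.rpow_nonneg hx0.le _
    have h2 : (0:ℝ) ≤ L ^ 3 := pow_nonneg hL0 3
    linarith only [mul_le_mul_of_nonneg_right hcc.le (mul_nonneg h1 h2)]
  · have hr1' : (1:ℝ) ≤ (r:ℝ) := by exact_mod_cast hr1
    have h2r : 2 * r ≤ n := by
      have h : ((2*r:ℕ):ℝ) ≤ ((n:ℕ):ℝ) := by push_cast; rw [← hxdef]; linarith only [hr2]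
      exact_mod_cast h
    have hrn : r ≤ n - 1 := by omega
    have hnr : n - r ≤ n - 1 := by omega
    have hrlen : r ≤ n := by omega
    have hgrb := hg r hrn
    have hgnrb := hg (n - r) hnr
    have hcast : ((n - r : ℕ) : ℝ) = x - (r:ℝ) := by
      rw [Nat.cast_sub hrlen]
    rw [hcast] at hgnrb
    set a : ℝ := (r:ℝ) with hadef
    set y : ℝ := x - a with hy
    have ha1 : (1:ℝ) ≤ a := hr1'
    have hay : a ≤ y := by rw [hy]; linarith only [hr2]
    have hxy2 : x/2 ≤ y := by rw [hy]; linarith only [hr2]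
    have hy1 : (1:ℝ) ≤ y := by linarith only [hxy2, hxN, hy, hr2]
    set u : ℝ := x ^ ((1:ℝ)/3) with hu
    set v : ℝ := x ^ (-(1:ℝ)/3) with hv
    set w : ℝ := x ^ ((2:ℝ)/3) with hw
    have hu0 : 0 < u := Real.rpow_pos_of_pos hx0 _
    have hv0 : 0 < v := Real.rpow_pos_of_pos hx0 _
    have hw0 : 0 < w := Real.rpow_pos_of_pos hx0 _
    have huv : u * v = 1 := by rw [hu, hv, ← Real.rpow_add hx0]; norm_num
    set B1 := c * a ^ ((2:ℝ)/3) * Real.log a ^ 3 with hB1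
    set B2 := c * y ^ ((2:ℝ)/3) * Real.log y ^ 3 with hB2
    set A := 2 * v * a * L with hA
    clear_value x L a y u v w B1 B2 A
    have hF1 : a / (3 * u) ≤ w - y ^ ((2:ℝ)/3) := by
      have h := concave_key' hx0 (show (0:ℝ) ≤ a by linarith only [ha1])
        (show a ≤ x by linarith only [hay, hy, ha1])
      rw [← hu, ← hw, ← hy] at h
      exact h
    have hdiv : a / (3 * u) = 1/3 * a * v := by
      rw [div_eq_iff (show (3:ℝ) * u ≠ 0 from ne_of_gt (by linarith only [hu0]))]
      linear_combination (-a) * huv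
    have hF1' : c * (1/3 * a * v) * L ^ 3 ≤ c * w * L ^ 3 - c * y ^ ((2:ℝ)/3) * L ^ 3 := by
      rw [← hdiv]
      linarith only [mul_le_mul_of_nonneg_left hF1 (mul_nonneg hcpos (pow_nonneg hL0 3))]
    have hly : Real.log y ≤ L := by
      rw [hLdef]
      exact Real.log_le_log (by linarith only [hy1]) (by rw [hy]; linarith only [ha1])
    have hly0 : 0 ≤ Real.log y := Real.log_nonneg hy1
    have hynn : (0:ℝ) ≤ y ^ ((2:ℝ)/3) := Real.rpow_nonneg (by linarith only [hy1]) _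
    have hF2 : B2 ≤ c * y ^ ((2:ℝ)/3) * L ^ 3 := by
      rw [hB2]
      have h := pow_le_pow_left₀ hly0 hly 3
      linarith only [mul_le_mul_of_nonneg_left h (mul_nonneg hcpos hynn)]
    have hF4 : A ≤ c/6 * a * v * L ^ 3 := by
      have hL2' : (4:ℝ) ≤ L ^ 2 := by nlinarith only [hL2]
      have h4L : 4 * L ≤ L ^ 3 := by
        linarith only [mul_le_mul_of_nonneg_right hL2' hL0]
      have h2L : 2 * L ≤ c/6 * L ^ 3 := by
        linarith only [h4L, hL0, mul_le_mul_of_nonneg_right hc.le (pow_nonneg hL0 3)]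
      have h := mul_le_mul_of_nonneg_right h2L
        (mul_nonneg hv0.le (show (0:ℝ) ≤ a by linarith only [ha1]))
      rw [hA]; linarith only [h]
    have hEfinal : Real.exp (B1 - B2) ≤ c/6 * a * v * L ^ 3 := by
      by_cases hcase : u ≤ a
      · have hmono := mono_f' ha1 hay
        have hE1 : Real.exp (B1 - B2) ≤ 1 := by
          rw [Real.exp_le_one_iff, hB1, hB2]
          linarith only [mul_le_mul_of_nonneg_left hmono hcpos]
        have hav : (1:ℝ) ≤ a * v := by
          have h := mul_le_mul_of_nonneg_right hcase hv0.le
          linarith only [h, huv]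
        have h8 : (8:ℝ) ≤ a * v * L ^ 3 := by
          have h := mul_le_mul_of_nonneg_right hav (pow_nonneg hL0 3)
          linarith only [h, hL3]
        have h9 := mul_le_mul_of_nonneg_right hc.le
          (show (0:ℝ) ≤ a * v * L ^ 3 by linarith only [h8])
        linarith only [hE1, h8, h9]
      · push_neg at hcase
        have hlogu' : Real.log u = 1/3 * L := by rw [hu, Real.log_rpow hx0, hLdef]
        have m1 := mono_f' ha1 hcase.le
        have hu23 : u ^ ((2:ℝ)/3) = x ^ ((2:ℝ)/9) := by
          rw [hu, ← Real.rpow_mul hx0.le]; norm_num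
        rw [hu23, hlogu'] at m1
        have hx29nn : (0:ℝ) ≤ x ^ ((2:ℝ)/9) := Real.rpow_nonneg hx0.le _
        have hB1x : B1 ≤ c * x ^ ((2:ℝ)/9) * L ^ 3 := by
          rw [hB1]
          have h := mul_le_mul_of_nonneg_left m1 hcpos
          have h2 : (0:ℝ) ≤ c * x ^ ((2:ℝ)/9) * L ^ 3 :=
            mul_nonneg (mul_nonneg hcpos hx29nn) (pow_nonneg hL0 3)
          linarith only [h, h2]
        have m2 := mono_f' (show (1:ℝ) ≤ x/2 by linarith only [hxN]) hxy2
        have hhalf : w / 2 ≤ (x/2) ^ ((2:ℝ)/3) := by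
          have hd : (x/2) ^ ((2:ℝ)/3) = w / (2:ℝ) ^ ((2:ℝ)/3) := by
            rw [hw, Real.div_rpow hx0.le (show (0:ℝ) ≤ 2 by norm_num)]
          have h2e : (2:ℝ) ^ ((2:ℝ)/3) ≤ 2 := by
            calc (2:ℝ) ^ ((2:ℝ)/3) ≤ (2:ℝ) ^ (1:ℝ) :=
                  Real.rpow_le_rpow_of_exponent_le (by norm_num) (by norm_num)
            _ = 2 := Real.rpow_one 2
          rw [hd]
          exact div_le_div_of_nonneg_left hw0.le (Real.rpow_pos_of_pos (by norm_num) _) h2e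
        have hlh : L/2 ≤ Real.log (x/2) := by
          rw [Real.log_div (show x ≠ 0 from ne_of_gt hx0) (by norm_num)]
          have h2d := Real.log_two_lt_d9
          have hLx : L = Real.log x := hLdef
          linarith only [h2d, hL2, hLx]
        have hcube : (L/2) ^ 3 ≤ Real.log (x/2) ^ 3 :=
          pow_le_pow_left₀ (by linarith only [hL0]) hlh 3
        have p1 : w/2 * (L/2) ^ 3 ≤ (x/2) ^ ((2:ℝ)/3) * Real.log (x/2) ^ 3 :=
          mul_le_mul hhalf hcube (pow_nonneg (by linarith only [hL0]) 3)
            (Real.rpow_nonneg (by linarith only [hx0]) _)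
        have hB2x : c/16 * w * L ^ 3 ≤ B2 := by
          rw [hB2]
          have h := mul_le_mul_of_nonneg_left (p1.trans m2) hcpos
          linarith only [h]
        have hsplit : w = x ^ ((2:ℝ)/9) * x ^ ((4:ℝ)/9) := by
          rw [hw, ← Real.rpow_add hx0]; norm_num
        have h49 : x ^ ((1:ℝ)/3) ≤ x ^ ((4:ℝ)/9) :=
          Real.rpow_le_rpow_of_exponent_le hx1 (by norm_num)
        have h13 : (32:ℝ) ≤ x ^ ((1:ℝ)/3) := by
          have h1 : ((32768:ℝ)) ^ ((1:ℝ)/3) ≤ x ^ ((1:ℝ)/3) :=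
            Real.rpow_le_rpow (by norm_num) hxN (by norm_num)
          have e : ((32768:ℝ)) ^ ((1:ℝ)/3) = 32 := by
            rw [show (32768:ℝ) = (32:ℝ) ^ (3:ℕ) by norm_num,
              ← Real.rpow_natCast (32:ℝ) 3, ← Real.rpow_mul (show (0:ℝ) ≤ 32 by norm_num)]
            norm_num
          linarith only [e ▸ h1]
        have hx29 : x ^ ((2:ℝ)/9) ≤ w / 32 := by
          rw [hsplit]
          have h := mul_le_mul_of_nonneg_left (h13.trans h49) hx29nn
          linarith only [h]
        have hgap : 2 * w ≤ B2 - B1 := by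
          have h := mul_le_mul_of_nonneg_left hx29
            (mul_nonneg hcpos (pow_nonneg hL0 3))
          have hq : (64:ℝ) ≤ c * L ^ 3 := by nlinarith only [hc, hL3]
          have hq2 := mul_le_mul_of_nonneg_right hq hw0.le
          linarith only [h, hB1x, hB2x, hq2]
        have hvexp : v = Real.exp (L * (-(1:ℝ)/3)) := by
          rw [hv, Real.rpow_def_of_pos hx0, hLdef]
        have hLw : L ≤ 6 * w := by
          have h1 : Real.log u ≤ u - 1 := Real.log_le_sub_one_of_pos hu0
          have huw : u ≤ w := by
            rw [hu, hw]; exact Real.rpow_le_rpow_of_exponent_le hx1 (by norm_num)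
          rw [hlogu'] at h1
          linarith only [h1, huw, hw0.le]
        calc Real.exp (B1 - B2) ≤ Real.exp (L * (-(1:ℝ)/3)) := by
              apply Real.exp_le_exp.2; linarith only [hgap, hLw]
        _ = v := hvexp.symm
        _ ≤ c/6 * a * v * L ^ 3 := by
              have h8 : (8:ℝ) ≤ a * L ^ 3 := by
                have h := mul_le_mul_of_nonneg_right ha1 (pow_nonneg hL0 3)
                linarith only [h, hL3]
              have h9 := mul_le_mul_of_nonneg_left h8 hv0.le
              have h10 := mul_le_mul_of_nonneg_right hc.le
                (mul_nonneg (mul_nonneg (show (0:ℝ) ≤ a by linarith only [ha1]) hv0.le)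
                  (pow_nonneg hL0 3))
              linarith only [h9, h10, hv0.le]
    have hmain : A + B2 + Real.exp (B1 - B2) ≤ c * w * L ^ 3 := by
      linarith only [hF1', hF2, hF4, hEfinal]
    have e1 : Real.exp (A + B2) * (Real.exp (B1 - B2) + 1)
        = Real.exp A * (Real.exp B1 + Real.exp B2) := by
      rw [mul_add, mul_one, ← Real.exp_add, mul_add, ← Real.exp_add, ← Real.exp_add,
        show A + B2 + (B1 - B2) = A + B1 by ring]
    calc g n ≤ Real.exp A * (g r + g (n - r)) := hgr
    _ ≤ Real.exp A * (Real.exp B1 + Real.exp B2) :=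
        mul_le_mul_of_nonneg_left (add_le_add hgrb hgnrb) (Real.exp_pos A).le
    _ = Real.exp (A + B2) * (Real.exp (B1 - B2) + 1) := e1.symm
    _ ≤ Real.exp (A + B2) * Real.exp (Real.exp (B1 - B2)) := by
        have h := Real.add_one_le_exp (Real.exp (B1 - B2))
        exact mul_le_mul_of_nonneg_left (by linarith only [h]) (Real.exp_pos _).le
    _ = Real.exp (A + B2 + Real.exp (B1 - B2)) := by rw [← Real.exp_add]
    _ ≤ Real.exp (c * w * L ^ 3) := Real.exp_le_exp.2 hmain
end

section
/- Let G be a bipartite α-expander on parts of size n, M a matching of size k with matched sets A1, A2, and let (L_r) be the alternating-reachability sets from L ⊆ V1∖A1 as above. Suppose |L_{r_0}| > n/2 and L_r ∩ (V2∖A2) = ∅ for all r ≤ r'. Then for every r with r_0 ≤ r ≤ r', |V2 ∖ L_r| ≤ (1+α)^{−(r−r_0)} · (n/2). -/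
open Finset
open scoped Classical

section Aux

variable {n : ℕ} {E M : Finset (Fin n × Fin n)} {L : Finset (Fin n)}

lemma altWalk_trunc {s : ℕ} {a b : ℕ → Fin n} (h : IsAltWalk E M s a b) {t : ℕ}
    (h1 : 0 < t) (h2 : t ≤ s) : IsAltWalk E M t a b := by
  obtain ⟨_, ha, hb, he, hm, h0⟩ := h
  exact ⟨h1, fun i hi j hj => ha i (hi.trans_le h2) j (hj.trans_le h2),
    fun i hi j hj => hb i (hi.trans_le h2) j (hj.trans_le h2),
    fun l hl => he l (hl.trans_le h2), fun l hl => hm l (hl.trans_le h2), h0⟩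

lemma mem_altReach_of_walk {r s : ℕ} {a b : ℕ → Fin n} (hw : IsAltWalk E M s a b)
    (hs1 : 1 ≤ s) (hsr : s ≤ r) (hL : a 0 ∈ L) : b (s - 1) ∈ altReach E M L r := by
  simp only [altReach, Finset.mem_filter, Finset.mem_univ, true_and]
  exact ⟨s, hs1, hsr, a, b, hw, hL, rfl⟩

lemma altReach_mono {r s : ℕ} (h : r ≤ s) : altReach E M L r ⊆ altReach E M L s := by
  intro j hj
  simp only [altReach, Finset.mem_filter, Finset.mem_univ, true_and] at hj ⊢
  obtain ⟨t, h1, h2, rest⟩ := hj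
  exact ⟨t, h1, h2.trans h, rest⟩

lemma altReach_extend (hM : IsMatching M) {s : ℕ} {a b : ℕ → Fin n}
    (hw : IsAltWalk E M s a b) (hL : a 0 ∈ L)
    {i j : Fin n} (hiM : (i, b (s - 1)) ∈ M) (hij : (i, j) ∈ E) :
    j ∈ altReach E M L (s + 1) := by
  by_cases hj : j ∈ altReach E M L s
  · exact altReach_mono (Nat.le_succ s) hj
  obtain ⟨hs, ha, hb, he, hm, h0⟩ := hw
  have hw' : IsAltWalk E M s a b := ⟨hs, ha, hb, he, hm, h0⟩
  -- `i` is distinct from all the `a l`, `l < s`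
  have hia : ∀ l < s, i ≠ a l := by
    intro l hl hil
    rcases Nat.eq_zero_or_pos l with rfl | hl0
    · exact h0 _ hiM (by simpa using hil)
    · have hl1 : l - 1 + 1 = l := Nat.succ_pred_eq_of_pos hl0
      have hm' : (a l, b (l - 1)) ∈ M := by
        have := hm (l - 1) (by omega)
        rwa [hl1] at this
      have hne : (i, b (s - 1)) ≠ (a l, b (l - 1)) := by
        intro hEq
        exact hb (s - 1) (by omega) (l - 1) (by omega) (by omega)
          (congrArg Prod.snd hEq)
      exact (hM _ hiM _ hm' hne).1 (by simpa using hil)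
  -- `j` is distinct from all the `b l`, `l < s`
  have hjb : ∀ l < s, j ≠ b l := by
    intro l hl hjl
    apply hj
    have := mem_altReach_of_walk (L := L) (altWalk_trunc hw' (Nat.succ_pos l) hl)
      (Nat.succ_pos l) hl hL
    simpa [hjl] using this
  -- `(i, j) ∉ M`
  have hijM : (i, j) ∉ M := by
    intro hmem
    by_cases heq : (i, j) = (i, b (s - 1))
    · have : j = b (s - 1) := congrArg Prod.snd heq
      exact hjb (s - 1) (by omega) this
    · exact (hM _ hmem _ hiM heq).1 rfl
  set a' : ℕ → Fin n := fun l => if l = s then i else a l with ha'def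
  set b' : ℕ → Fin n := fun l => if l = s then j else b l with hb'def
  have has : ∀ l < s, a' l = a l := fun l hl => by simp [ha'def, Nat.ne_of_lt hl]
  have hbs : ∀ l < s, b' l = b l := fun l hl => by simp [hb'def, Nat.ne_of_lt hl]
  have hwalk : IsAltWalk E M (s + 1) a' b' := by
    refine ⟨Nat.succ_pos s, ?_, ?_, ?_, ?_, ?_⟩
    · intro i0 hi0 j0 hj0 hne
      rcases Nat.lt_succ_iff_lt_or_eq.mp hi0 with hi0 | rfl <;>
        rcases Nat.lt_succ_iff_lt_or_eq.mp hj0 with hj0 | rfl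
      · rw [has _ hi0, has _ hj0]; exact ha _ hi0 _ hj0 hne
      · rw [has _ hi0, ha'def]; simp only [if_pos rfl]
        exact fun h => hia _ hi0 h.symm
      · rw [has _ hj0, ha'def]; simp only [if_pos rfl]
        exact hia _ hj0
      · exact absurd rfl hne
    · intro i0 hi0 j0 hj0 hne
      rcases Nat.lt_succ_iff_lt_or_eq.mp hi0 with hi0 | rfl <;>
        rcases Nat.lt_succ_iff_lt_or_eq.mp hj0 with hj0 | rfl
      · rw [hbs _ hi0, hbs _ hj0]; exact hb _ hi0 _ hj0 hne
      · rw [hbs _ hi0, hb'def]; simp only [if_pos rfl]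
        exact fun h => hjb _ hi0 h.symm
      · rw [hbs _ hj0, hb'def]; simp only [if_pos rfl]
        exact hjb _ hj0
      · exact absurd rfl hne
    · intro l hl
      rcases Nat.lt_succ_iff_lt_or_eq.mp hl with hl | rfl
      · rw [has _ hl, hbs _ hl]; exact he _ hl
      · simp only [ha'def, hb'def, if_pos rfl]
        exact ⟨hij, hijM⟩
    · intro l hl
      have hls : l < s := by omega
      rw [hbs _ hls]
      rcases Nat.lt_or_ge (l + 1) s with h1 | h1
      · rw [has _ h1]; exact hm _ h1
      · have : l + 1 = s := by omega
        subst this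
        simp only [ha'def, if_pos rfl]
        have : l = l + 1 - 1 := by omega
        rw [this]; exact hiM
    · intro e he'
      have : a' 0 = a 0 := has 0 hs
      rw [this]; exact h0 e he'
  have := mem_altReach_of_walk (L := L) hwalk (Nat.succ_pos s) le_rfl
    (by rwa [has 0 hs])
  simpa [hb'def] using this

lemma compl_card_real (X : Finset (Fin n)) :
    (((Finset.univ \ X).card : ℝ)) = n - X.card := by
  rw [card_sdiff_of_subset (subset_univ _), card_univ, Fintype.card_fin,
    Nat.cast_sub (by simpa using card_le_univ X)]

/-- Key step: if every vertex of `L_r` is matched, then the neighbourhood of the complement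
of `L_{r+1}` avoids the `M`-partners of `L_r`, hence is at most `|V₂ ∖ L_r|`. -/
lemma key_step (hM : IsMatching M) {r : ℕ}
    (hall : ∀ j ∈ altReach E M L r, ∃ e ∈ M, e.2 = j) :
    (rightN E (Finset.univ \ altReach E M L (r + 1))).card ≤
      (Finset.univ \ altReach E M L r).card := by
  set A' : Finset (Fin n) := (M.filter (fun e => e.2 ∈ altReach E M L r)).image Prod.fst
    with hA'def
  have hsub : rightN E (Finset.univ \ altReach E M L (r + 1)) ⊆ Finset.univ \ A' := by
    intro x hx
    simp only [rightN, Finset.mem_image, Finset.mem_filter] at hx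
    obtain ⟨e, ⟨heE, he2⟩, he1⟩ := hx
    rw [Finset.mem_sdiff] at he2
    rw [Finset.mem_sdiff]
    refine ⟨Finset.mem_univ _, fun hxA => ?_⟩
    simp only [hA'def, Finset.mem_image, Finset.mem_filter] at hxA
    obtain ⟨m, ⟨hmM, hm2⟩, hm1⟩ := hxA
    simp only [altReach, Finset.mem_filter, Finset.mem_univ, true_and] at hm2
    obtain ⟨s, hs1, hsr, a, b, hw, haL, hbm⟩ := hm2
    have hiM : (m.1, b (s - 1)) ∈ M := by rw [hbm]; exact hmM
    have hijE : (m.1, e.2) ∈ E := by rw [hm1, ← he1]; exact heE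
    have := altReach_extend hM hw haL hiM hijE
    exact he2.2 (altReach_mono (by omega) this)
  have hcardA' : A'.card = (altReach E M L r).card := by
    have hinj1 : Set.InjOn Prod.fst
        (↑(M.filter (fun e => e.2 ∈ altReach E M L r)) : Set (Fin n × Fin n)) := by
      intro e he f hf hef
      simp only [Finset.coe_filter, Set.mem_setOf_eq] at he hf
      by_contra hne
      exact (hM _ he.1 _ hf.1 hne).1 hef
    have hinj2 : Set.InjOn Prod.snd
        (↑(M.filter (fun e => e.2 ∈ altReach E M L r)) : Set (Fin n × Fin n)) := by
      intro e he f hf hef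
      simp only [Finset.coe_filter, Set.mem_setOf_eq] at he hf
      by_contra hne
      exact (hM _ he.1 _ hf.1 hne).2 hef
    have himg : (M.filter (fun e => e.2 ∈ altReach E M L r)).image Prod.snd =
        altReach E M L r := by
      apply Finset.Subset.antisymm
      · intro x hx
        simp only [Finset.mem_image, Finset.mem_filter] at hx
        obtain ⟨e, ⟨_, he2⟩, he⟩ := hx
        rwa [← he]
      · intro x hx
        obtain ⟨e, heM, he2⟩ := hall x hx
        simp only [Finset.mem_image, Finset.mem_filter]
        exact ⟨e, ⟨heM, by rwa [he2]⟩, he2⟩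
    rw [hA'def, Finset.card_image_of_injOn hinj1,
      ← Finset.card_image_of_injOn hinj2, himg]
  calc (rightN E (Finset.univ \ altReach E M L (r + 1))).card
      ≤ (Finset.univ \ A').card := Finset.card_le_card hsub
    _ = (Finset.univ \ altReach E M L r).card := by
        rw [card_sdiff_of_subset (subset_univ _), card_sdiff_of_subset (subset_univ _), hcardA']

end Aux

/-- Shrinking of the complement of the alternating-reachability sets: if `|L_{r₀}| > n/2` and
no unmatched right vertex is reached up to level `r'`, then for `r₀ ≤ r ≤ r'`,
`|V₂ ∖ L_r| ≤ (1+α)^{−(r−r₀)} (n/2)`. -/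
theorem altReach_complement_shrinks (n k : ℕ) (E M : Finset (Fin n × Fin n)) (α : ℝ)
    (hα : 0 < α) (hexp : IsExpander E α) (hME : M ⊆ E) (hM : IsMatching M)
    (hcard : M.card = k) (hk : k < n) (L : Finset (Fin n))
    (hL : ∀ v ∈ L, ∀ e ∈ M, e.1 ≠ v) (r₀ r' : ℕ)
    (h0 : (n : ℝ) / 2 < ((altReach E M L r₀).card : ℝ))
    (hno : ∀ r ≤ r', ∀ j ∈ altReach E M L r, ∃ e ∈ M, e.2 = j) :
    ∀ r : ℕ, r₀ ≤ r → r ≤ r' →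
      ((Finset.univ \ altReach E M L r).card : ℝ) ≤
        ((n : ℝ) / 2) / (1 + α) ^ (r - r₀) := by
  have hα1 : (0 : ℝ) < 1 + α := by linarith
  have hLmono : ∀ {s t : ℕ}, r₀ ≤ s → s ≤ t →
      ((Finset.univ \ altReach E M L t).card : ℝ) < (n : ℝ) / 2 := by
    intro s t hs hst
    rw [compl_card_real]
    have h1 : ((altReach E M L r₀).card : ℝ) ≤ ((altReach E M L t).card : ℝ) := by
      exact_mod_cast Finset.card_le_card (altReach_mono (hs.trans hst))
    linarith
  intro r hr0 hr'
  induction r, hr0 using Nat.le_induction with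
  | base =>
    simp only [Nat.sub_self, pow_zero, div_one]
    exact (hLmono le_rfl le_rfl).le
  | succ r hr ih =>
    have hr'' : r ≤ r' := by omega
    have IH := ih hr''
    have hkey : ((rightN E (Finset.univ \ altReach E M L (r + 1))).card : ℝ) ≤
        ((Finset.univ \ altReach E M L r).card : ℝ) := by
      exact_mod_cast key_step hM (hno r hr'')
    have hsmall : ((Finset.univ \ altReach E M L (r + 1)).card : ℝ) ≤ (n : ℝ) / 2 :=
      (hLmono hr (by omega)).le
    have hexp' := hexp.2 (Finset.univ \ altReach E M L (r + 1)) hsmall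
    have hchain : (1 + α) * ((Finset.univ \ altReach E M L (r + 1)).card : ℝ) ≤
        ((n : ℝ) / 2) / (1 + α) ^ (r - r₀) := le_trans hexp' (le_trans hkey IH)
    have hstep : r + 1 - r₀ = (r - r₀) + 1 := by omega
    have hP : (0 : ℝ) < (1 + α) ^ (r - r₀) := by positivity
    rw [le_div_iff₀ hP] at hchain
    rw [hstep, pow_succ, le_div_iff₀ (by positivity)]
    calc ((Finset.univ \ altReach E M L (r + 1)).card : ℝ) * ((1 + α) ^ (r - r₀) * (1 + α))
        = (1 + α) * ((Finset.univ \ altReach E M L (r + 1)).card : ℝ) * (1 + α) ^ (r - r₀) := by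
          ring
      _ ≤ (n : ℝ) / 2 := hchain
end
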